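/- arXiv:2308.03614 — 5 statements merged into one kernel-verified Lean document; each statement's English description precedes it below -/
import Mathlib

section
/- If $B > 1$, then there exists a constant $c \in (0,\infty)$ such that $D(n)/(c\, n^{B}) \to 1$ as $n \to \infty$. -/
open MeasureTheory Filter Finset

noncomputable section

/-- `m_k = q_k / p_k` where `q_k = 1 - p_k`. -/
def mSeq (p : ℕ → ℝ) (k : ℕ) : ℝ := (1 - p k) / p k

/-- `D(k,n) = 1 + ∑_{j=k}^n m_j m_{j+1} ⋯ m_n`. -/
def Dkn (m : ℕ → ℝ) (k n : ℕ) : ℝ :=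
  1 + ∑ j ∈ Finset.Icc k n, ∏ i ∈ Finset.Icc j n, m i

/-- `D(n) = D(1,n)`. -/
def Dn (m : ℕ → ℝ) (n : ℕ) : ℝ := Dkn m 1 n

/-- The one-step transition probability `P(Z_n = j ∣ Z_{n-1} = z)
= C(z+j, j) p_n^{1+z} q_n^j`. -/
def transProb (p : ℕ → ℝ) (n z j : ℕ) : ℝ :=
  ((z + j).choose j : ℝ) * p n ^ (1 + z) * (1 - p n) ^ j

/-- `Z` is a Markov chain with `Z_0 = 0` and one-step transitions `transProb p`,
i.e. a branching process with geometric offspring distributions in the varying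
environment `p`, with one immigrant in each generation.  This is expressed by
prescribing all finite-dimensional distributions. -/
def IsBPVEI {Ω : Type*} [MeasurableSpace Ω] (P : Measure Ω)
    (p : ℕ → ℝ) (Z : ℕ → Ω → ℕ) : Prop :=
  (∀ n, Measurable (Z n)) ∧
  ∀ (n : ℕ) (z : ℕ → ℕ),
    (P {ω | ∀ i ≤ n, Z i ω = z i}).toReal =
      (if z 0 = 0 then (1 : ℝ) else 0) *
        ∏ i ∈ Finset.Icc 1 n, transProb p i (z (i - 1)) (z i)

/-- The specific environment: `p_i = 1/2 - B/(4i)` for `i > i0`, `p_i = 1/2` for `i ≤ i0`. -/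
def pB (B : ℝ) (i0 : ℕ) (i : ℕ) : ℝ := if i ≤ i0 then 1 / 2 else 1 / 2 - B / (4 * i)

lemma m_eq_one (B : ℝ) (i0 i : ℕ) (hi : i ≤ i0) : mSeq (pB B i0) i = 1 := by
  simp [mSeq, pB, hi]; norm_num

lemma m_eq (B : ℝ) (i0 i : ℕ) (hi : i0 < i) :
    mSeq (pB B i0) i = (2*i + B)/(2*i - B) := by
  have hi' : ¬ (i ≤ i0) := by omega
  have h0 : 0 < i := by omega
  have hipos : (0:ℝ) < i := by exact_mod_cast h0
  rw [mSeq, pB, if_neg hi']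
  rw [show (1:ℝ) - (1/2 - B/(4*i)) = (2*i + B)/(4*i) by field_simp; ring,
      show (1:ℝ)/2 - B/(4*i) = (2*i - B)/(4*i) by field_simp; ring]
  rw [div_div_div_cancel_right₀]; positivity

-- bounds on m
lemma twoi_sub_pos (B : ℝ) (i0 i : ℕ) (hBi0 : B < 2*i0) (hi : i0 < i) :
    0 < 2*(i:ℝ) - B := by
  have : (i0:ℝ) + 1 ≤ i := by exact_mod_cast hi
  nlinarith

lemma one_le_m (B : ℝ) (i0 i : ℕ) (hB : 0 < B) (hBi0 : B < 2*i0) :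
    1 ≤ mSeq (pB B i0) i := by
  rcases le_or_gt i i0 with h | h
  · rw [m_eq_one B i0 i h]
  · rw [m_eq B i0 i h]
    have h2 := twoi_sub_pos B i0 i hBi0 h
    rw [le_div_iff₀ h2]; linarith

lemma m_pos (B : ℝ) (i0 i : ℕ) (hB : 0 < B) (hBi0 : B < 2*i0) :
    0 < mSeq (pB B i0) i := lt_of_lt_of_le one_pos (one_le_m B i0 i hB hBi0)

def piP (B : ℝ) (i0 : ℕ) (n : ℕ) : ℝ := ∏ i ∈ Finset.Ioc 0 n, mSeq (pB B i0) i

lemma piP_zero (B : ℝ) (i0 : ℕ) : piP B i0 0 = 1 := by simp [piP]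

lemma piP_succ (B : ℝ) (i0 n : ℕ) : piP B i0 (n+1) = piP B i0 n * mSeq (pB B i0) (n+1) := by
  rw [piP, piP, ← Finset.prod_Ioc_succ_top (Nat.zero_le _)]

lemma one_le_piP (B : ℝ) (i0 : ℕ) (hB : 0 < B) (hBi0 : B < 2*i0) (n : ℕ) :
    1 ≤ piP B i0 n := by
  rw [piP, show (1:ℝ) = ∏ _i ∈ Finset.Ioc 0 n, (1:ℝ) from (Finset.prod_const_one).symm]
  exact Finset.prod_le_prod (by intros; norm_num) (fun i _ => one_le_m B i0 i hB hBi0)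

lemma piP_pos (B : ℝ) (i0 : ℕ) (hB : 0 < B) (hBi0 : B < 2*i0) (n : ℕ) :
    0 < piP B i0 n := lt_of_lt_of_le one_pos (one_le_piP B i0 hB hBi0 n)

lemma piP_i0 (B : ℝ) (i0 : ℕ) (n : ℕ) (hn : n ≤ i0) : piP B i0 n = 1 := by
  rw [piP]; exact Finset.prod_eq_one (fun i hi => m_eq_one B i0 i (le_trans (Finset.mem_Ioc.1 hi).2 hn))

lemma prod_Icc_eq (B : ℝ) (i0 : ℕ) (hB : 0 < B) (hBi0 : B < 2*i0) (j n : ℕ) (hj : 1 ≤ j) (hjn : j ≤ n) :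
    ∏ i ∈ Finset.Icc j n, mSeq (pB B i0) i = piP B i0 n / piP B i0 (j-1) := by
  have h1 : j - 1 ≤ n := by omega
  rw [eq_div_iff (piP_pos B i0 hB hBi0 (j-1)).ne', piP, piP, mul_comm,
    show Finset.Icc j n = Finset.Ioc (j-1) n from by ext x; simp [Finset.mem_Icc, Finset.mem_Ioc]; omega,
    Finset.prod_Ioc_consecutive _ (Nat.zero_le _) h1]

lemma Dn_eq (B : ℝ) (i0 : ℕ) (hB : 0 < B) (hBi0 : B < 2*i0) (n : ℕ) :
    Dn (mSeq (pB B i0)) n = 1 + piP B i0 n * ∑ j ∈ Finset.range n, (piP B i0 j)⁻¹ := by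
  rw [Dn, Dkn]
  congr 1
  have key : ∀ j ∈ Finset.Icc 1 n, ∏ i ∈ Finset.Icc j n, mSeq (pB B i0) i
      = piP B i0 n * (piP B i0 (j-1))⁻¹ := fun j hj => by
    obtain ⟨h1, h2⟩ := Finset.mem_Icc.1 hj
    rw [prod_Icc_eq B i0 hB hBi0 j n h1 h2, div_eq_mul_inv]
  rw [Finset.sum_congr rfl key, ← Finset.Ico_add_one_right_eq_Icc, Finset.sum_Ico_eq_sum_range]
  simp only [Nat.add_sub_cancel_left, Nat.add_sub_cancel, add_tsub_cancel_left]
  rw [← Finset.mul_sum]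

def aSeq (B : ℝ) (i0 : ℕ) (i : ℕ) : ℝ :=
  if i0 < i then Real.log (mSeq (pB B i0) i) - B*(Real.log i - Real.log ((i:ℝ)-1)) else 0

lemma abound (B : ℝ) (i0 : ℕ) (hB : 0 < B) (hBi0 : B < 2*i0) (i : ℕ) (hi0 : 0 < i0)
    (hi : 2*i0 ≤ i) :
    |aSeq B i0 i| ≤ 2*B*(B+2)/(i:ℝ)^2 := by
  have hii0 : i0 < i := by omega
  have hi2 : 2 ≤ i := by omega
  set x : ℝ := (i:ℝ) with hxdef
  have hx2 : 2 ≤ x := by rw [hxdef]; exact_mod_cast hi2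
  have hBx : B < x := by
    have : ((2*i0 : ℕ) : ℝ) ≤ x := by rw [hxdef]; exact_mod_cast hi
    push_cast at this; linarith
  have hx0 : 0 < x := by linarith
  have hx1 : 0 < x - 1 := by linarith
  have h2xB : 0 < 2*x - B := by linarith
  have h2xB' : x ≤ 2*x - B := by linarith
  rw [aSeq, if_pos hii0, m_eq B i0 i hii0]
  have hr : 0 < (2*x + B)/(2*x - B) := by positivity
  have hs : 0 < x/(x-1) := by positivity
  -- bounds on log m
  have hLm1 : Real.log ((2*x + B)/(2*x - B)) ≤ 2*B/(2*x - B) := by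
    have := Real.log_le_sub_one_of_pos hr
    have he : (2*x + B)/(2*x - B) - 1 = 2*B/(2*x - B) := by field_simp; ring
    linarith [he ▸ this]
  have hLm2 : 2*B/(2*x + B) ≤ Real.log ((2*x + B)/(2*x - B)) := by
    have := Real.one_sub_inv_le_log_of_pos hr
    have he : 1 - ((2*x + B)/(2*x - B))⁻¹ = 2*B/(2*x + B) := by
      rw [inv_div]; field_simp; ring
    linarith [he ▸ this]
  -- bounds on log x - log (x-1)
  have hld : Real.log x - Real.log (x-1) = Real.log (x/(x-1)) :=
    (Real.log_div hx0.ne' hx1.ne').symm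
  have hLn1 : Real.log x - Real.log (x-1) ≤ 1/(x-1) := by
    rw [hld]
    have := Real.log_le_sub_one_of_pos hs
    have he : x/(x-1) - 1 = 1/(x-1) := by field_simp; ring
    linarith [he ▸ this]
  have hLn2 : 1/x ≤ Real.log x - Real.log (x-1) := by
    rw [hld]
    have := Real.one_sub_inv_le_log_of_pos hs
    have he : 1 - (x/(x-1))⁻¹ = 1/x := by rw [inv_div]; field_simp; ring
    linarith [he ▸ this]
  rw [abs_le]
  constructor
  · rw [neg_le, neg_sub]
    have step1 : B*(Real.log x - Real.log (x-1)) - Real.log ((2*x + B)/(2*x - B))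
        ≤ B/(x-1) - 2*B/(2*x + B) := by
      have h1 : B*(Real.log x - Real.log (x-1)) ≤ B*(1/(x-1)) :=
        mul_le_mul_of_nonneg_left hLn1 hB.le
      rw [mul_one_div] at h1
      linarith
    refine step1.trans ?_
    rw [div_sub_div _ _ hx1.ne' (by positivity : (2*x+B) ≠ 0), div_le_div_iff₀ (by positivity) (by positivity)]
    have k1 : x*x ≤ 2*(x-1)*(2*x+B) := by nlinarith
    have k2 : 0 ≤ B*(B+2) * (2*(x-1)*(2*x+B) - x*x) :=
      mul_nonneg (by positivity) (by linarith)
    nlinarith [k2]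
  · have step1 : Real.log ((2*x + B)/(2*x - B)) - B*(Real.log x - Real.log (x-1))
        ≤ 2*B/(2*x - B) - B/x := by
      have h1 : B*(1/x) ≤ B*(Real.log x - Real.log (x-1)) :=
        mul_le_mul_of_nonneg_left hLn2 hB.le
      rw [mul_one_div] at h1
      linarith
    refine step1.trans ?_
    rw [div_sub_div _ _ h2xB.ne' hx0.ne', div_le_div_iff₀ (by positivity) (by positivity)]
    nlinarith [sq_nonneg x, mul_pos hB hx0, mul_pos (mul_pos hB hB) hx0]

lemma summable_aSeq (B : ℝ) (i0 : ℕ) (hB : 0 < B) (hBi0 : B < 2*i0) (hi0 : 0 < i0) :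
    Summable (aSeq B i0) := by
  apply Summable.of_norm_bounded_eventually_nat (g := fun i => 2*B*(B+2)/(i:ℝ)^2)
  · have h2 : Summable (fun i : ℕ => ((i:ℝ)^2)⁻¹) :=
      Real.summable_nat_pow_inv.2 (by norm_num)
    exact (h2.mul_left (2*B*(B+2))).congr (fun n => by rw [div_eq_mul_inv])
  · filter_upwards [eventually_ge_atTop (2*i0)] with i hi
    exact abound B i0 hB hBi0 i hi0 hi

lemma log_piP_eq (B : ℝ) (i0 : ℕ) (hB : 0 < B) (hBi0 : B < 2*i0) (hi0 : 0 < i0)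
    (n : ℕ) (hn : i0 ≤ n) :
    Real.log (piP B i0 n) - B * Real.log n
      = -(B * Real.log i0) + ∑ i ∈ Finset.range (n+1), aSeq B i0 i := by
  induction n, hn using Nat.le_induction with
  | base =>
    rw [piP_i0 B i0 i0 le_rfl, Real.log_one]
    rw [Finset.sum_eq_zero (fun i hi => by
      rw [aSeq, if_neg (by simp at hi; omega)])]
    ring
  | succ n hn ih =>
    have hm : 0 < mSeq (pB B i0) (n+1) := m_pos B i0 (n+1) hB hBi0
    have hp : 0 < piP B i0 n := piP_pos B i0 hB hBi0 n
    rw [piP_succ, Real.log_mul hp.ne' hm.ne',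
      Finset.sum_range_succ, aSeq, if_pos (by omega)]
    have hc : ((n+1 : ℕ) : ℝ) - 1 = (n : ℝ) := by push_cast; ring
    rw [hc]
    push_cast
    push_cast at ih
    linarith [ih]

lemma tendsto_piP_div (B : ℝ) (i0 : ℕ) (hB : 0 < B) (hBi0 : B < 2*i0) (hi0 : 0 < i0) :
    ∃ C : ℝ, 0 < C ∧
      Tendsto (fun n : ℕ => piP B i0 n / (n:ℝ) ^ B) atTop (nhds C) := by
  have hsum := summable_aSeq B i0 hB hBi0 hi0
  set L : ℝ := -(B * Real.log i0) + ∑' i, aSeq B i0 i with hL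
  have h1 : Tendsto (fun n : ℕ => ∑ i ∈ Finset.range (n+1), aSeq B i0 i) atTop
      (nhds (∑' i, aSeq B i0 i)) :=
    hsum.hasSum.tendsto_sum_nat.comp (tendsto_add_atTop_nat 1)
  have h2 : Tendsto (fun n : ℕ => Real.log (piP B i0 n) - B * Real.log n) atTop (nhds L) := by
    refine Tendsto.congr' ?_ ((tendsto_const_nhds.add h1))
    filter_upwards [eventually_ge_atTop i0] with n hn
    exact (log_piP_eq B i0 hB hBi0 hi0 n hn).symm
  refine ⟨Real.exp L, Real.exp_pos L, ?_⟩
  refine Tendsto.congr' ?_ ((Real.continuous_exp.tendsto L).comp h2)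
  filter_upwards [eventually_ge_atTop 1] with n hn
  have hn0 : (0:ℝ) < n := by exact_mod_cast hn
  have hp : 0 < piP B i0 n := piP_pos B i0 hB hBi0 n
  simp only [Function.comp_apply]
  rw [Real.exp_sub, Real.exp_log hp, Real.rpow_def_of_pos hn0, mul_comm]


/-- If `B > 1` then `D(n) ∼ c n^B` for some constant `c ∈ (0, ∞)`. -/
theorem stmt2 (B : ℝ) (hB : 1 < B) (i0 : ℕ) (hi0 : 0 < i0)
    (hBi0 : B / (4 * i0) < 1 / 2) :
    ∃ c : ℝ, 0 < c ∧
      Tendsto (fun n : ℕ => Dn (mSeq (pB B i0)) n / (c * (n : ℝ) ^ B)) atTop (nhds 1) := by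
  have hB0 : 0 < B := by linarith
  have hi0R : (0:ℝ) < i0 := by exact_mod_cast hi0
  have hB2 : B < 2 * i0 := by
    rw [div_lt_div_iff₀ (by positivity) (by norm_num)] at hBi0
    linarith
  obtain ⟨C, hC, hten⟩ := tendsto_piP_div B i0 hB0 hB2 hi0
  -- eventually piP n ≥ C/2 * n^B
  have hev : ∀ᶠ n : ℕ in atTop, C/2 * (n:ℝ)^B ≤ piP B i0 n := by
    have h := hten.eventually (eventually_ge_nhds (show C/2 < C by linarith))
    filter_upwards [h, eventually_ge_atTop 1] with n h1 h2
    have hn0 : (0:ℝ) < n := by exact_mod_cast h2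
    have hnB : (0:ℝ) < (n:ℝ)^B := Real.rpow_pos_of_pos hn0 B
    rw [le_div_iff₀ hnB] at h1
    linarith
  -- summability of inverses
  have hsumInv : Summable (fun j : ℕ => (piP B i0 j)⁻¹) := by
    apply Summable.of_norm_bounded_eventually_nat (g := fun n => (2/C) * ((n:ℝ)^B)⁻¹)
    · exact (Real.summable_nat_rpow_inv.2 hB).mul_left _
    · filter_upwards [hev, eventually_ge_atTop 1] with n h1 h2
      have hn0 : (0:ℝ) < n := by exact_mod_cast h2
      have hnB : (0:ℝ) < (n:ℝ)^B := Real.rpow_pos_of_pos hn0 B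
      have hp : 0 < piP B i0 n := piP_pos B i0 hB0 hB2 n
      rw [Real.norm_eq_abs, abs_of_pos (inv_pos.2 hp)]
      have := inv_anti₀ (by positivity : (0:ℝ) < C/2 * (n:ℝ)^B) h1
      rwa [mul_inv, show (C/2 : ℝ)⁻¹ = 2/C by rw [inv_div]] at this
  set S : ℝ := ∑' j, (piP B i0 j)⁻¹ with hS
  have hSpos : 0 < S := by
    refine Summable.tsum_pos hsumInv (fun j => inv_nonneg.2 (piP_pos B i0 hB0 hB2 j).le) 0 ?_
    rw [piP_zero]; norm_num
  -- tendsto of partial sums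
  have h3 : Tendsto (fun n : ℕ => ∑ j ∈ Finset.range n, (piP B i0 j)⁻¹) atTop (nhds S) :=
    hsumInv.hasSum.tendsto_sum_nat
  -- piP tends to infinity
  have hpiTop : Tendsto (fun n : ℕ => piP B i0 n) atTop atTop := by
    have hnB : Tendsto (fun n : ℕ => (n:ℝ)^B) atTop atTop :=
      (tendsto_rpow_atTop hB0).comp tendsto_natCast_atTop_atTop
    refine Tendsto.congr' ?_ (Filter.Tendsto.pos_mul_atTop hC hten hnB)
    filter_upwards [eventually_ge_atTop 1] with n hn
    have hn0 : (0:ℝ) < n := by exact_mod_cast hn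
    field_simp
  have h4 : Tendsto (fun n : ℕ => (piP B i0 n)⁻¹) atTop (nhds 0) :=
    hpiTop.inv_tendsto_atTop
  refine ⟨C * S, mul_pos hC hSpos, ?_⟩
  have hmain : Tendsto (fun n : ℕ =>
      ((piP B i0 n)⁻¹ + ∑ j ∈ Finset.range n, (piP B i0 j)⁻¹)
        * (piP B i0 n / (n:ℝ)^B) / (C * S)) atTop (nhds 1) := by
    have := ((h4.add h3).mul hten).div_const (C * S)
    rw [zero_add] at this
    convert this using 2
    field_simp
  refine Tendsto.congr' ?_ hmain
  filter_upwards [eventually_ge_atTop 1] with n hn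
  have hn0 : (0:ℝ) < n := by exact_mod_cast hn
  have hnB : (0:ℝ) < (n:ℝ)^B := Real.rpow_pos_of_pos hn0 B
  have hp : 0 < piP B i0 n := piP_pos B i0 hB0 hB2 n
  rw [Dn_eq B i0 hB0 hB2 n]
  field_simp
end
end

section
/- If $B = 1$, then $D(n)/(n \log n) \to 1$ as $n \to \infty$. -/
open MeasureTheory Filter Finset

noncomputable section

namespace Stmt3Aux

variable (i0 : ℕ)

lemma mval1 {i : ℕ} (hi : i ≤ i0) : mSeq (pB 1 i0) i = 1 := by
  simp [mSeq, pB, hi]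
  norm_num

lemma mval2 (hi0 : 0 < i0) {i : ℕ} (hi : i0 < i) :
    mSeq (pB 1 i0) i = (2 * (i : ℝ) + 1) / (2 * i - 1) := by
  have h2 : 2 ≤ i := by omega
  have h2' : (2 : ℝ) ≤ i := by exact_mod_cast h2
  have hi' : ¬ i ≤ i0 := by omega
  have hne : (i : ℝ) ≠ 0 := by positivity
  have hden : (0:ℝ) < 2 * i - 1 := by linarith
  simp only [mSeq, pB, if_neg hi']
  rw [div_eq_div_iff (by rw [show (1:ℝ)/2 - 1/(4*i) = (2*i-1)/(4*i) by field_simp; ring]; positivity) hden.ne']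
  field_simp
  ring

lemma prodC (hi0 : 0 < i0) {j : ℕ} (hj : i0 < j) : ∀ n, j ≤ n →
    ∏ i ∈ Icc j n, mSeq (pB 1 i0) i = (2 * (n : ℝ) + 1) / (2 * j - 1) := by
  intro n hn
  induction n, hn using Nat.le_induction with
  | base => rw [Finset.Icc_self, Finset.prod_singleton, mval2 i0 hi0 hj]
  | succ n hn ih =>
    have hj2 : (2:ℝ) ≤ j := by exact_mod_cast (show 2 ≤ j by omega)
    have hn1 : (j:ℝ) ≤ n := by exact_mod_cast hn
    have h1 : (0:ℝ) < 2 * (n:ℝ) + 1 := by positivity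
    have h2 : (0:ℝ) < 2 * (j:ℝ) - 1 := by linarith
    rw [Finset.prod_Icc_succ_top (by omega), ih, mval2 i0 hi0 (by omega)]
    push_cast
    rw [show 2 * ((n:ℝ) + 1) + 1 = 2 * (n:ℝ) + 3 by ring,
        show 2 * ((n:ℝ) + 1) - 1 = 2 * (n:ℝ) + 1 by ring,
        div_mul_div_comm, div_eq_div_iff (mul_pos h2 h1).ne' h2.ne']
    ring

lemma prodD (hi0 : 0 < i0) {j : ℕ} (hj1 : 1 ≤ j) (hj2 : j ≤ i0) {n : ℕ} (hn : i0 < n) :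
    ∏ i ∈ Icc j n, mSeq (pB 1 i0) i = (2 * (n : ℝ) + 1) / (2 * i0 + 1) := by
  obtain ⟨j', rfl⟩ : ∃ j', j = j' + 1 := ⟨j - 1, by omega⟩
  rw [Finset.Icc_add_one_left_eq_Ioc, ← Finset.prod_Ioc_consecutive _ (show j' ≤ i0 by omega) hn.le]
  rw [Finset.prod_eq_one (fun i hi => mval1 i0 (Finset.mem_Ioc.mp hi).2), one_mul]
  rw [← Finset.Icc_add_one_left_eq_Ioc, prodC i0 hi0 (by omega) n (by omega)]
  congr 1
  push_cast
  ring

def S (n : ℕ) : ℝ := ∑ j ∈ Ioc i0 n, (2 * (j : ℝ) - 1)⁻¹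

lemma S_low (hi0 : 0 < i0) : ∀ n, i0 ≤ n →
    Real.log (2 * n + 1) - Real.log (2 * i0 + 1) ≤ 2 * S i0 n := by
  intro n hn
  induction n, hn using Nat.le_induction with
  | base => simp [S]
  | succ n hn ih =>
    have hn1 : (1:ℝ) ≤ n := by exact_mod_cast (show 1 ≤ n by omega)
    have hp : (0:ℝ) < 2 * (n:ℝ) + 1 := by linarith
    have key : Real.log (2 * (n:ℝ) + 3) - Real.log (2 * n + 1) ≤ 2 * (2 * (n:ℝ) + 1)⁻¹ := by
      have h := Real.log_le_sub_one_of_pos (show (0:ℝ) < (2 * (n:ℝ) + 3) / (2 * n + 1) by positivity)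
      rw [Real.log_div (by positivity) (by positivity)] at h
      have he : (2 * (n:ℝ) + 3) / (2 * n + 1) - 1 = 2 * (2 * (n:ℝ) + 1)⁻¹ := by
        field_simp
        norm_num
      linarith
    have hs : S i0 (n + 1) = S i0 n + (2 * ((n:ℝ) + 1) - 1)⁻¹ := by
      unfold S
      rw [Finset.sum_Ioc_succ_top hn]
      push_cast
      ring_nf
    rw [hs]
    push_cast
    have : (2 * ((n:ℝ) + 1) - 1)⁻¹ = (2 * (n:ℝ) + 1)⁻¹ := by ring_nf
    rw [this]
    have h3 : (2 * ((n:ℝ) + 1) + 1) = 2 * (n:ℝ) + 3 := by ring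
    rw [h3]
    linarith

lemma S_high (hi0 : 0 < i0) : ∀ n, i0 ≤ n →
    2 * S i0 n ≤ Real.log (2 * n - 1) - Real.log (2 * i0 - 1) := by
  intro n hn
  induction n, hn using Nat.le_induction with
  | base => simp [S]
  | succ n hn ih =>
    have hn1 : (1:ℝ) ≤ n := by exact_mod_cast (show 1 ≤ n from le_trans hi0 hn)
    have hp : (0:ℝ) < 2 * (n:ℝ) - 1 := by linarith
    have key : 2 * (2 * (n:ℝ) + 1)⁻¹ ≤ Real.log (2 * (n:ℝ) + 1) - Real.log (2 * n - 1) := by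
      have h := Real.log_le_sub_one_of_pos (show (0:ℝ) < (2 * (n:ℝ) - 1) / (2 * n + 1) by positivity)
      rw [Real.log_div (by positivity) (by positivity)] at h
      have he : (2 * (n:ℝ) - 1) / (2 * n + 1) - 1 = -(2 * (2 * (n:ℝ) + 1)⁻¹) := by
        have h1 : (0:ℝ) < 2 * (n:ℝ) + 1 := by linarith
        field_simp
        ring
      linarith
    have hs : S i0 (n + 1) = S i0 n + (2 * ((n:ℝ) + 1) - 1)⁻¹ := by
      unfold S
      rw [Finset.sum_Ioc_succ_top hn]
      push_cast
      ring_nf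
    rw [hs]
    push_cast
    have h1 : (2 * ((n:ℝ) + 1) - 1)⁻¹ = (2 * (n:ℝ) + 1)⁻¹ := by ring_nf
    have h2 : (2 * ((n:ℝ) + 1) - 1) = 2 * (n:ℝ) + 1 := by ring
    rw [h1, h2]
    linarith



lemma Dn_eq (i0 : ℕ) (hi0 : 0 < i0) {n : ℕ} (hn : i0 < n) :
    Dn (mSeq (pB 1 i0)) n
      = 1 + i0 * ((2 * (n:ℝ) + 1) / (2 * i0 + 1)) + (2 * (n:ℝ) + 1) * S i0 n := by
  unfold Dn Dkn
  rw [show Finset.Icc 1 n = Finset.Ioc 0 n from Finset.Icc_add_one_left_eq_Ioc 0 n]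
  rw [← Finset.sum_Ioc_consecutive _ (Nat.zero_le i0) hn.le]
  have h1 : ∑ j ∈ Finset.Ioc 0 i0, ∏ i ∈ Finset.Icc j n, mSeq (pB 1 i0) i
      = i0 * ((2 * (n:ℝ) + 1) / (2 * i0 + 1)) := by
    rw [Finset.sum_congr rfl (fun j hj => prodD i0 hi0 (Finset.mem_Ioc.mp hj).1
      (Finset.mem_Ioc.mp hj).2 hn)]
    rw [Finset.sum_const, Nat.card_Ioc, nsmul_eq_mul]
    norm_num
  have h2 : ∑ j ∈ Finset.Ioc i0 n, ∏ i ∈ Finset.Icc j n, mSeq (pB 1 i0) i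
      = (2 * (n:ℝ) + 1) * S i0 n := by
    rw [Finset.sum_congr rfl (fun j hj => prodC i0 hi0 (Finset.mem_Ioc.mp hj).1 n
      (Finset.mem_Ioc.mp hj).2)]
    unfold S
    rw [Finset.mul_sum]
    exact Finset.sum_congr rfl fun j _ => div_eq_mul_inv _ _
  rw [h1, h2]
  ring

lemma loginv_lim : Tendsto (fun n : ℕ => (Real.log n)⁻¹) atTop (nhds 0) :=
  (Real.tendsto_log_atTop.comp tendsto_natCast_atTop_atTop).inv_tendsto_atTop

lemma ninv_lim : Tendsto (fun n : ℕ => ((n:ℝ))⁻¹) atTop (nhds 0) :=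
  tendsto_natCast_atTop_atTop.inv_tendsto_atTop

lemma log_ratio_lim (c : ℝ) (hc : |c| ≤ 1) :
    Tendsto (fun n : ℕ => Real.log (2 * n + c) / Real.log n) atTop (nhds 1) := by
  have hc1 : -1 ≤ c := neg_le_of_abs_le hc
  have hc2 : c ≤ 1 := le_of_abs_le hc
  have hin : Tendsto (fun n : ℕ => 2 + c * ((n:ℝ))⁻¹) atTop (nhds 2) := by
    have := ninv_lim.const_mul c
    simpa using tendsto_const_nhds.add this
  have h1 : Tendsto (fun n : ℕ => Real.log (2 + c * ((n:ℝ))⁻¹)) atTop (nhds (Real.log 2)) :=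
    ((Real.continuousAt_log (by norm_num)).tendsto).comp hin
  have h2 : Tendsto (fun n : ℕ => 1 + Real.log (2 + c * ((n:ℝ))⁻¹) * (Real.log n)⁻¹)
      atTop (nhds 1) := by
    have := h1.mul loginv_lim
    simpa using tendsto_const_nhds.add this
  apply h2.congr'
  filter_upwards [eventually_ge_atTop 2] with n hn
  have hn0 : (0:ℝ) < n := by exact_mod_cast (show 0 < n by omega)
  have hn2 : (2:ℝ) ≤ n := by exact_mod_cast hn
  have hlog : 0 < Real.log n := Real.log_pos (by linarith)
  have hpos : (0:ℝ) < 2 + c * ((n:ℝ))⁻¹ := by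
    have : ((n:ℝ))⁻¹ ≤ 1 := by rw [inv_le_one_iff₀]; right; linarith
    have h0 : (0:ℝ) ≤ ((n:ℝ))⁻¹ := by positivity
    nlinarith
  have key : Real.log (2 * n + c) = Real.log n + Real.log (2 + c * ((n:ℝ))⁻¹) := by
    rw [← Real.log_mul hn0.ne' hpos.ne']
    congr 1
    field_simp
  rw [key]
  field_simp



lemma S_div_log_lim (i0 : ℕ) (hi0 : 0 < i0) :
    Tendsto (fun n : ℕ => S i0 n / Real.log n) atTop (nhds (1/2)) := by
  have hlim1 := log_ratio_lim 1 (by norm_num)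
  have hlim2 := log_ratio_lim (-1) (by norm_num)
  simp only [← sub_eq_add_neg] at hlim2
  have hA : Tendsto (fun n : ℕ =>
      (Real.log (2*(n:ℝ)+1) - Real.log (2*(i0:ℝ)+1)) / (2 * Real.log n)) atTop (nhds (1/2)) := by
    have h := (hlim1.sub (loginv_lim.const_mul (Real.log (2*(i0:ℝ)+1)))).div_const 2
    rw [show ((1:ℝ) - Real.log (2*(i0:ℝ)+1) * 0)/2 = 1/2 by ring] at h
    apply h.congr'
    filter_upwards [eventually_ge_atTop 2] with n hn
    rw [← div_eq_mul_inv, div_sub_div_same, div_div, mul_comm (Real.log n) 2]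
  have hBd : Tendsto (fun n : ℕ =>
      (Real.log (2*(n:ℝ)-1) - Real.log (2*(i0:ℝ)-1)) / (2 * Real.log n)) atTop (nhds (1/2)) := by
    have h := (hlim2.sub (loginv_lim.const_mul (Real.log (2*(i0:ℝ)-1)))).div_const 2
    rw [show ((1:ℝ) - Real.log (2*(i0:ℝ)-1) * 0)/2 = 1/2 by ring] at h
    apply h.congr'
    filter_upwards [eventually_ge_atTop 2] with n hn
    rw [← div_eq_mul_inv, div_sub_div_same, div_div, mul_comm (Real.log n) 2]
  apply tendsto_of_tendsto_of_tendsto_of_le_of_le' hA hBd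
  · filter_upwards [eventually_ge_atTop (i0+1)] with n hn
    have hn2 : (2:ℝ) ≤ n := by exact_mod_cast (show 2 ≤ n by omega)
    have hlog : 0 < Real.log n := Real.log_pos (by linarith)
    have hl := S_low i0 hi0 n (by omega)
    rw [div_le_div_iff₀ (mul_pos two_pos hlog) hlog]
    nlinarith [hl, hlog]
  · filter_upwards [eventually_ge_atTop (i0+1)] with n hn
    have hn2 : (2:ℝ) ≤ n := by exact_mod_cast (show 2 ≤ n by omega)
    have hlog : 0 < Real.log n := Real.log_pos (by linarith)
    have hh := S_high i0 hi0 n (by omega)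
    rw [div_le_div_iff₀ hlog (mul_pos two_pos hlog)]
    nlinarith [hh, hlog]

lemma two_n_lim : Tendsto (fun n : ℕ => (2*(n:ℝ)+1)/n) atTop (nhds 2) := by
  have h : Tendsto (fun n : ℕ => 2 + ((n:ℝ))⁻¹) atTop (nhds 2) := by
    simpa using tendsto_const_nhds.add ninv_lim
  apply h.congr'
  filter_upwards [eventually_ge_atTop 1] with n hn
  have hn0 : (0:ℝ) < n := by exact_mod_cast (show 0 < n by omega)
  field_simp

theorem main (i0 : ℕ) (hi0 : 0 < i0) :
    Tendsto (fun n : ℕ => Dn (mSeq (pB 1 i0)) n / ((n : ℝ) * Real.log n)) atTop (nhds 1) := by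
  have hS := S_div_log_lim i0 hi0
  have hlimval : Tendsto (fun n : ℕ =>
      ((n:ℝ))⁻¹ * (Real.log n)⁻¹
      + (((i0:ℝ)/(2*(i0:ℝ)+1)) * ((2*(n:ℝ)+1)/n)) * (Real.log n)⁻¹
      + ((2*(n:ℝ)+1)/n) * (S i0 n / Real.log n)) atTop
      (nhds ((0:ℝ)*0 + (((i0:ℝ)/(2*(i0:ℝ)+1))*2)*0 + 2*(1/2))) :=
    ((ninv_lim.mul loginv_lim).add
      ((tendsto_const_nhds.mul two_n_lim).mul loginv_lim)).add (two_n_lim.mul hS)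
  rw [show ((0:ℝ)*0 + (((i0:ℝ)/(2*(i0:ℝ)+1))*2)*0 + 2*(1/2)) = 1 by ring] at hlimval
  apply hlimval.congr'
  filter_upwards [eventually_ge_atTop (i0+1)] with n hn
  rw [Dn_eq i0 hi0 (by omega)]
  have hn2 : (2:ℝ) ≤ n := by exact_mod_cast (show 2 ≤ n by omega)
  have hn0 : (0:ℝ) < n := by linarith
  have hlog : 0 < Real.log n := Real.log_pos (by linarith)
  have hi0r : (0:ℝ) < 2*(i0:ℝ)+1 := by positivity
  field_simp

end Stmt3Aux


/-- If `B = 1` then `D(n) ∼ n log n`. -/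
theorem stmt3 (B : ℝ) (hB : B = 1) (i0 : ℕ) (hi0 : 0 < i0)
    (hBi0 : B / (4 * i0) < 1 / 2) :
    Tendsto (fun n : ℕ => Dn (mSeq (pB B i0)) n / ((n : ℝ) * Real.log n)) atTop (nhds 1) := by
  subst hB
  exact Stmt3Aux.main i0 hi0
end
end

section
/- If $B = 1$, then $\lim_{n\to\infty} \dfrac{E\,|C \cap [1,n]|}{\log\log n} = 1$, where $|C\cap[1,n]|$ denotes the number of indices $1 \le i \le n$ with $Z_i = a$. -/
open MeasureTheory Filter Finset

noncomputable section

def geomS (p : ℕ → ℝ) (n j : ℕ) : ℝ :=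
  (1 / Dn (mSeq p) n) * (1 - 1 / Dn (mSeq p) n) ^ j








lemma Dn_zero (m : ℕ → ℝ) : Dn m 0 = 1 := by simp [Dn, Dkn]

lemma Dn_succ (m : ℕ → ℝ) (n : ℕ) : Dn m (n + 1) = 1 + m (n + 1) * Dn m n := by
  simp only [Dn, Dkn]
  rw [Finset.sum_Icc_succ_top (by omega : 1 ≤ n + 1)]
  have h1 : ∀ j ∈ Finset.Icc 1 n, (∏ i ∈ Finset.Icc j (n+1), m i)
      = (∏ i ∈ Finset.Icc j n, m i) * m (n+1) := by
    intro j hj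
    simp only [Finset.mem_Icc] at hj
    exact Finset.prod_Icc_succ_top (by omega) m
  rw [Finset.sum_congr rfl h1, ← Finset.sum_mul]
  rw [Finset.Icc_self, Finset.prod_singleton]
  ring

lemma Dn_ge (m : ℕ → ℝ) (hm : ∀ i, 1 ≤ i → 1 ≤ m i) (n : ℕ) : (n : ℝ) + 1 ≤ Dn m n := by
  induction n with
  | zero => simp [Dn_zero]
  | succ n ih =>
    rw [Dn_succ]
    have h1 : 1 ≤ m (n + 1) := hm _ (by omega)
    have h2 : (0:ℝ) < Dn m n := by linarith [ih, Nat.cast_nonneg (α := ℝ) n]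
    have : (n:ℝ) + 1 ≤ m (n+1) * Dn m n := le_trans ih (le_mul_of_one_le_left (le_of_lt h2) h1)
    push_cast
    linarith

lemma Dn_pos (m : ℕ → ℝ) (hm : ∀ i, 1 ≤ i → 1 ≤ m i) (n : ℕ) : 0 < Dn m n := by
  have := Dn_ge m hm n
  have : (0:ℝ) ≤ (n:ℝ) := Nat.cast_nonneg n
  linarith [Dn_ge m hm n]


lemma geomS_nonneg (p : ℕ → ℝ) (hp : ∀ i, 1 ≤ i → 0 < p i ∧ p i ≤ 1/2) (n j : ℕ) :
    0 ≤ geomS p n j := by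
  have hm : ∀ i, 1 ≤ i → 1 ≤ mSeq p i := by
    intro i hi
    obtain ⟨h1, h2⟩ := hp i hi
    rw [mSeq, le_div_iff₀ h1]
    linarith
  have h1 := Dn_ge (mSeq p) hm n
  have h0 := Dn_pos (mSeq p) hm n
  have hle : 1 / Dn (mSeq p) n ≤ 1 := by
    rw [div_le_one h0]; linarith [Nat.cast_nonneg (α := ℝ) n]
  have hge : 0 < 1 / Dn (mSeq p) n := by positivity
  apply mul_nonneg (le_of_lt hge)
  apply pow_nonneg; linarith





lemma hm_of_hp (p : ℕ → ℝ) (hp : ∀ i, 1 ≤ i → 0 < p i ∧ p i ≤ 1/2) :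
    ∀ i, 1 ≤ i → 1 ≤ mSeq p i := by
  intro i hi
  obtain ⟨h1, h2⟩ := hp i hi
  rw [mSeq, le_div_iff₀ h1]; linarith

lemma geomStep (p : ℕ → ℝ) (hp : ∀ i, 1 ≤ i → 0 < p i ∧ p i ≤ 1/2) (n j : ℕ) :
    HasSum (fun z : ℕ => geomS p n z * transProb p (n + 1) z j) (geomS p (n + 1) j) := by
  have hm := hm_of_hp p hp
  obtain ⟨hp1, hp2⟩ := hp (n + 1) (by omega)
  set D := Dn (mSeq p) n with hD
  set p' := p (n + 1) with hp'
  set q' := 1 - p' with hq'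
  have hD1 : (1:ℝ) ≤ D := by
    have := Dn_ge (mSeq p) hm n
    have : (0:ℝ) ≤ (n:ℝ) := Nat.cast_nonneg n
    linarith [Dn_ge (mSeq p) hm n]
  have hD0 : (0:ℝ) < D := by linarith
  have hq0 : (0:ℝ) < q' := by rw [hq']; linarith
  set π := 1 / D with hπ
  set r := 1 - π with hr
  have hπ0 : 0 < π := by positivity
  have hπ1 : π ≤ 1 := by rw [hπ, div_le_one hD0]; linarith
  have hr0 : 0 ≤ r := by rw [hr]; linarith
  have hr1 : r < 1 := by rw [hr]; linarith
  have hrp : ‖r * p'‖ < 1 := by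
    rw [Real.norm_eq_abs, abs_of_nonneg (by positivity)]
    calc r * p' ≤ r * 1 := by nlinarith
    _ < 1 := by linarith
  have key := (hasSum_choose_mul_geometric_of_norm_lt_one (𝕜 := ℝ) j hrp).mul_left (π * p' * q' ^ j)
  have heq : (fun z : ℕ => (π * p' * q' ^ j) * (((z + j).choose j : ℝ) * (r * p') ^ z))
      = fun z : ℕ => geomS p n z * transProb p (n + 1) z j := by
    funext z
    simp only [geomS, transProb, ← hD, ← hπ, ← hp', ← hq', ← hr]
    rw [mul_pow, pow_add, pow_one]
    ring
  rw [heq] at key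
  convert key using 1
  case e'_3 => rfl
  -- value equality
  have hden : (0:ℝ) < 1 - r * p' := by nlinarith
  have hD' : Dn (mSeq p) (n + 1) = (p' + q' * D) / p' := by
    rw [Dn_succ, mSeq, ← hp', ← hq']
    field_simp
    rw [← hD]
  have h1rp : 1 - r * p' = (q' * D + p') / D := by
    rw [hr, hπ, hq']; field_simp; ring
  have hsum : (0:ℝ) < q' * D + p' := by positivity
  rw [geomS, hD', h1rp, hπ]
  rw [one_div_div, div_pow, one_div_div]
  have hne : p' + q' * D ≠ 0 := by positivity
  have e2 : 1 - p' / (p' + q' * D) = q' * D / (p' + q' * D) := by field_simp; ring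
  rw [e2, div_pow, mul_pow, pow_succ]
  field_simp
  ring





/-- extend a finite path by value `j` from position `n` on -/
def extPath (n : ℕ) (v : Fin n → ℕ) (j : ℕ) : ℕ → ℕ :=
  fun i => if h : i < n then v ⟨i, h⟩ else j

def pathWeight (p : ℕ → ℝ) (n : ℕ) (z : ℕ → ℕ) : ℝ :=
  (if z 0 = 0 then (1:ℝ) else 0) * ∏ i ∈ Finset.Icc 1 n, transProb p i (z (i-1)) (z i)

lemma transProb_nonneg (p : ℕ → ℝ) (hp : ∀ i, 1 ≤ i → 0 < p i ∧ p i ≤ 1/2) {i : ℕ}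
    (hi : 1 ≤ i) (z j : ℕ) : 0 ≤ transProb p i z j := by
  obtain ⟨h1, h2⟩ := hp i hi
  have : (0:ℝ) ≤ 1 - p i := by linarith
  unfold transProb
  positivity

lemma pathWeight_nonneg (p : ℕ → ℝ) (hp : ∀ i, 1 ≤ i → 0 < p i ∧ p i ≤ 1/2) (n : ℕ)
    (z : ℕ → ℕ) : 0 ≤ pathWeight p n z := by
  unfold pathWeight
  apply mul_nonneg
  · split <;> norm_num
  · apply Finset.prod_nonneg
    intro i hi
    simp only [Finset.mem_Icc] at hi
    exact transProb_nonneg p hp hi.1 _ _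

lemma pathWeight_snoc (p : ℕ → ℝ) (n : ℕ) (v : Fin n → ℕ) (z j : ℕ) :
    pathWeight p (n+1) (extPath (n+1) (Fin.snoc v z) j)
      = pathWeight p n (extPath n v z) * transProb p (n+1) z j := by
  set w := extPath (n+1) (Fin.snoc v z) j with hw
  set y := extPath n v z with hy
  have hagree : ∀ i, i ≤ n → w i = y i := by
    intro i hi
    rcases lt_or_eq_of_le hi with h | h
    · have h1 : i < n + 1 := by omega
      simp only [hw, hy, extPath, dif_pos h1, dif_pos h]
      rw [Fin.snoc]
      simp only [Fin.coe_castLT]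
      rw [dif_pos h]
      rfl
    · subst h
      have h1 : i < i + 1 := by omega
      simp only [hw, hy, extPath, dif_pos h1, dif_neg (lt_irrefl i)]
      rw [Fin.snoc]
      simp [dif_neg (lt_irrefl i)]
  have hwtop : w (n+1) = j := by
    simp only [hw, extPath, dif_neg (lt_irrefl (n+1))]
  have hwn : w n = z := by
    rw [hagree n le_rfl, hy]
    simp [extPath]
  unfold pathWeight
  rw [Finset.prod_Icc_succ_top (by omega : 1 ≤ n + 1)]
  have hprod : ∏ i ∈ Finset.Icc 1 n, transProb p i (w (i-1)) (w i)
      = ∏ i ∈ Finset.Icc 1 n, transProb p i (y (i-1)) (y i) := by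
    apply Finset.prod_congr rfl
    intro i hi
    simp only [Finset.mem_Icc] at hi
    rw [hagree (i-1) (by omega), hagree i hi.2]
  have h0 : w 0 = y 0 := hagree 0 (by omega)
  rw [hprod, h0]
  have : w (n+1-1) = z := by simpa using hwn
  rw [this, hwtop]
  ring

lemma tsum_pathWeight (p : ℕ → ℝ) (hp : ∀ i, 1 ≤ i → 0 < p i ∧ p i ≤ 1/2) :
    ∀ n j, (∑' v : Fin n → ℕ, ENNReal.ofReal (pathWeight p n (extPath n v j)))
      = ENNReal.ofReal (geomS p n j) := by
  intro n
  induction n with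
  | zero =>
    intro j
    have : ∀ v : Fin 0 → ℕ, pathWeight p 0 (extPath 0 v j) = if j = 0 then 1 else 0 := by
      intro v
      simp [pathWeight, extPath]
    rw [tsum_congr (fun v => by rw [this v])]
    rw [tsum_eq_single (default : Fin 0 → ℕ) (fun b hb => absurd (Subsingleton.elim b default) hb)]
    congr 1
    simp only [geomS, Dn_zero]
    rcases eq_or_ne j 0 with h | h
    · simp [h]
    · simp [h, zero_pow h]
  | succ n ih =>
    intro j
    rw [← ((Fin.snocEquiv (fun _ => ℕ)).tsum_eq
        (fun w => ENNReal.ofReal (pathWeight p (n+1) (extPath (n+1) w j))))]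
    have hrw : ∀ (x : ℕ × (Fin n → ℕ)),
        ENNReal.ofReal (pathWeight p (n+1) (extPath (n+1) (Fin.snocEquiv (fun _ => ℕ) x) j))
        = ENNReal.ofReal (pathWeight p n (extPath n x.2 x.1))
          * ENNReal.ofReal (transProb p (n+1) x.1 j) := by
      intro x
      have : (Fin.snocEquiv (fun _ => ℕ) x : Fin (n+1) → ℕ) = Fin.snoc x.2 x.1 := by
        rfl
      rw [this, pathWeight_snoc,
        ENNReal.ofReal_mul (pathWeight_nonneg p hp n _)]
    rw [tsum_congr hrw, ENNReal.tsum_prod (f := fun z (v : Fin n → ℕ) =>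
      ENNReal.ofReal (pathWeight p n (extPath n v z)) * ENNReal.ofReal (transProb p (n+1) z j))]
    have hin : ∀ z : ℕ, (∑' v : Fin n → ℕ, ENNReal.ofReal (pathWeight p n (extPath n v z))
          * ENNReal.ofReal (transProb p (n+1) z j))
        = ENNReal.ofReal (geomS p n z * transProb p (n+1) z j) := by
      intro z
      rw [ENNReal.tsum_mul_right, ih z,
        ← ENNReal.ofReal_mul (geomS_nonneg p hp n z)]
    rw [tsum_congr hin]
    rw [← ENNReal.ofReal_tsum_of_nonneg
      (fun z => mul_nonneg (geomS_nonneg p hp n z) (transProb_nonneg p hp (by omega) z j))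
      (geomStep p hp n j).summable]
    rw [(geomStep p hp n j).tsum_eq]

theorem marginal {Ω : Type*} [MeasurableSpace Ω] (P : Measure Ω) [IsProbabilityMeasure P]
    (p : ℕ → ℝ) (hp : ∀ i, 1 ≤ i → 0 < p i ∧ p i ≤ 1/2)
    (Z : ℕ → Ω → ℕ) (hZ : IsBPVEI P p Z) (n j : ℕ) :
    (P {ω | Z n ω = j}).toReal = geomS p n j := by
  have hcyl : ∀ v : Fin n → ℕ, MeasurableSet {ω | ∀ i ≤ n, Z i ω = extPath n v j i} := by
    intro v
    have : {ω | ∀ i ≤ n, Z i ω = extPath n v j i}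
        = ⋂ (i : ℕ) (_ : i ≤ n), (Z i) ⁻¹' {extPath n v j i} := by
      ext ω; simp [Set.mem_iInter]
    rw [this]
    exact MeasurableSet.iInter fun i => MeasurableSet.iInter fun _ =>
      (hZ.1 i) (measurableSet_singleton _)
  have hunion : {ω | Z n ω = j} = ⋃ v : Fin n → ℕ, {ω | ∀ i ≤ n, Z i ω = extPath n v j i} := by
    ext ω
    simp only [Set.mem_setOf_eq, Set.mem_iUnion]
    constructor
    · intro h
      refine ⟨fun i => Z i ω, fun i hi => ?_⟩
      unfold extPath
      split
      · rfl
      · have : i = n := by omega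
        rw [this, h]
    · rintro ⟨v, hv⟩
      have := hv n le_rfl
      rwa [extPath, dif_neg (lt_irrefl n)] at this
  have hdisj : Pairwise (Function.onFun Disjoint
      (fun v : Fin n → ℕ => {ω | ∀ i ≤ n, Z i ω = extPath n v j i})) := by
    intro v v' hne
    rw [Function.onFun, Set.disjoint_left]
    intro ω h1 h2
    apply hne
    funext k
    have e1 := h1 k (le_of_lt k.2)
    have e2 := h2 k (le_of_lt k.2)
    have l1 : extPath n v j k = v k := by rw [extPath, dif_pos k.2]
    have l2 : extPath n v' j k = v' k := by rw [extPath, dif_pos k.2]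
    rw [l1] at e1; rw [l2] at e2
    rw [← e1, ← e2]
  rw [hunion, measure_iUnion hdisj hcyl]
  have hterm : ∀ v : Fin n → ℕ, P {ω | ∀ i ≤ n, Z i ω = extPath n v j i}
      = ENNReal.ofReal (pathWeight p n (extPath n v j)) := by
    intro v
    rw [← ENNReal.ofReal_toReal (measure_ne_top P _)]
    congr 1
    exact hZ.2 n (extPath n v j)
  rw [tsum_congr hterm, tsum_pathWeight p hp n j,
    ENNReal.toReal_ofReal (geomS_nonneg p hp n j)]





lemma pB_prop (i0 : ℕ) (hi0 : 0 < i0) : ∀ i, 1 ≤ i → 0 < pB 1 i0 i ∧ pB 1 i0 i ≤ 1/2 := by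
  intro i hi
  unfold pB
  split
  · norm_num
  · have h1 : (1:ℝ) ≤ (i:ℝ) := by exact_mod_cast hi
    have h2 : (0:ℝ) < 4 * (i:ℝ) := by linarith
    have h3 : 1 / (4 * (i:ℝ)) ≤ 1/4 := by
      rw [div_le_div_iff₀ h2 (by norm_num)]; linarith
    have h4 : 0 < 1 / (4 * (i:ℝ)) := by positivity
    constructor <;> [linarith; linarith]

variable (i0 : ℕ)

lemma mB_small (hi0 : 0 < i0) (n : ℕ) (h1 : 1 ≤ n) (h2 : n ≤ i0) : mSeq (pB 1 i0) n = 1 := by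
  unfold mSeq pB
  rw [if_pos h2]
  norm_num

lemma mB_big (n : ℕ) (h : i0 < n) :
    mSeq (pB 1 i0) n = (2*(n:ℝ)+1)/(2*(n:ℝ)-1) := by
  unfold mSeq pB
  rw [if_neg (by omega)]
  have h1 : (1:ℝ) ≤ (n:ℝ) := by exact_mod_cast Nat.one_le_iff_ne_zero.mpr (by omega)
  have h2 : (0:ℝ) < (n:ℝ) := by linarith
  have h3 : (0:ℝ) < 2*(n:ℝ)-1 := by linarith
  have h4 : 1/2 - 1/(4*(n:ℝ)) = (2*(n:ℝ)-1)/(4*(n:ℝ)) := by field_simp; ring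
  have h5 : 1 - (2*(n:ℝ)-1)/(4*(n:ℝ)) = (2*(n:ℝ)+1)/(4*(n:ℝ)) := by field_simp; ring
  rw [h4, h5]
  have h6 : (2*(n:ℝ)-1) ≠ 0 := ne_of_gt h3
  have h7 : (4*(n:ℝ)) ≠ 0 := by positivity
  rw [div_div_div_eq, div_eq_div_iff (by positivity) h6]
  ring

/-- `e` sequence -/
def eN (n : ℕ) : ℝ := ((i0:ℝ)+1)/(2*(i0:ℝ)+1) + ∑ k ∈ Finset.Icc (i0+1) n, (1:ℝ)/(2*(k:ℝ)+1)

lemma Dn_small (hi0 : 0 < i0) : ∀ n, n ≤ i0 → Dn (mSeq (pB 1 i0)) n = (n:ℝ) + 1 := by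
  intro n
  induction n with
  | zero => intro _; simp [Dn_zero]
  | succ n ih =>
    intro h
    rw [Dn_succ, ih (by omega), mB_small i0 hi0 (n+1) (by omega) h]
    push_cast; ring

lemma Dn_closed (hi0 : 0 < i0) : ∀ n, i0 ≤ n → Dn (mSeq (pB 1 i0)) n = (2*(n:ℝ)+1) * eN i0 n := by
  intro n
  induction n with
  | zero =>
    intro h
    exact absurd h (by omega)
  | succ n ih =>
    intro h
    rcases Nat.lt_or_ge n i0 with hlt | hge
    · -- n + 1 = i0
      have hni : n + 1 = i0 := by omega
      rw [Dn_small i0 hi0 (n+1) (by omega)]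
      unfold eN
      rw [hni, Finset.Icc_eq_empty (by omega), Finset.sum_empty, add_zero]
      have : (0:ℝ) < 2*(i0:ℝ)+1 := by positivity
      push_cast
      field_simp
    · have hrec := Dn_succ (mSeq (pB 1 i0)) n
      rw [mB_big i0 (n+1) (by omega)] at hrec
      rw [hrec, ih hge]
      have he : eN i0 (n+1) = eN i0 n + 1/(2*((n:ℝ)+1)+1) := by
        unfold eN
        rw [Finset.sum_Icc_succ_top (by omega : i0 + 1 ≤ n + 1)]
        push_cast; ring
      rw [he]
      have h1 : (2*((n+1:ℕ):ℝ)-1) = 2*(n:ℝ)+1 := by push_cast; ring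
      have h2 : (0:ℝ) < 2*(n:ℝ)+1 := by positivity
      rw [h1]
      have h3 : (2*((n+1:ℕ):ℝ)+1) = 2*(n:ℝ)+3 := by push_cast; ring
      rw [h3]
      field_simp
      ring

lemma telescope (f : ℕ → ℝ) (m : ℕ) :
    ∀ n, m ≤ n → ∑ k ∈ Finset.Icc (m+1) n, (f k - f (k-1)) = f n - f m := by
  intro n
  induction n with
  | zero => intro h; interval_cases m; simp
  | succ n ih =>
    intro h
    rcases Nat.lt_or_ge n m with hlt | hge
    · have : m = n + 1 := by omega
      subst this
      rw [Finset.Icc_eq_empty (by omega)]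
      simp
    · rw [Finset.sum_Icc_succ_top (by omega : m + 1 ≤ n + 1), ih hge]
      simp only [Nat.add_sub_cancel]
      ring

lemma log_diff_le (k : ℕ) (hk : 1 ≤ k) :
    Real.log (2*(k:ℝ)+3) - Real.log (2*(k:ℝ)+1) ≤ 2/(2*(k:ℝ)+1) := by
  have h1 : (1:ℝ) ≤ (k:ℝ) := by exact_mod_cast hk
  have h2 : (0:ℝ) < 2*(k:ℝ)+1 := by linarith
  have h3 : (0:ℝ) < 2*(k:ℝ)+3 := by linarith
  rw [← Real.log_div (by positivity) (by positivity)]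
  have := Real.log_le_sub_one_of_pos (show (0:ℝ) < (2*(k:ℝ)+3)/(2*(k:ℝ)+1) by positivity)
  have heq : (2*(k:ℝ)+3)/(2*(k:ℝ)+1) - 1 = 2/(2*(k:ℝ)+1) := by field_simp; ring
  linarith [heq ▸ this]

lemma le_log_diff (k : ℕ) (hk : 1 ≤ k) :
    2/(2*(k:ℝ)+1) ≤ Real.log (2*(k:ℝ)+1) - Real.log (2*(k:ℝ)-1) := by
  have h1 : (1:ℝ) ≤ (k:ℝ) := by exact_mod_cast hk
  have h2 : (0:ℝ) < 2*(k:ℝ)+1 := by linarith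
  have h3 : (0:ℝ) < 2*(k:ℝ)-1 := by linarith
  have := Real.log_le_sub_one_of_pos (show (0:ℝ) < (2*(k:ℝ)-1)/(2*(k:ℝ)+1) by positivity)
  rw [Real.log_div (by positivity) (by positivity)] at this
  have heq : (2*(k:ℝ)-1)/(2*(k:ℝ)+1) - 1 = -(2/(2*(k:ℝ)+1)) := by field_simp; ring
  rw [heq] at this
  linarith

lemma sum_inv_upper (hi0 : 0 < i0) (n : ℕ) (h : i0 ≤ n) :
    ∑ k ∈ Finset.Icc (i0+1) n, (1:ℝ)/(2*(k:ℝ)+1)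
      ≤ (1/2) * (Real.log (2*(n:ℝ)+1) - Real.log (2*(i0:ℝ)+1)) := by
  have key : ∑ k ∈ Finset.Icc (i0+1) n, (1:ℝ)/(2*(k:ℝ)+1)
      ≤ ∑ k ∈ Finset.Icc (i0+1) n,
        ((fun j : ℕ => (1/2) * Real.log (2*(j:ℝ)+1)) k - (fun j : ℕ => (1/2) * Real.log (2*(j:ℝ)+1)) (k-1)) := by
    apply Finset.sum_le_sum
    intro k hk
    simp only [Finset.mem_Icc] at hk
    have hk1 : 1 ≤ k := by omega
    have hc : ((k - 1 : ℕ) : ℝ) = (k:ℝ) - 1 := by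
      have : (1:ℝ) ≤ (k:ℝ) := by exact_mod_cast hk1
      push_cast [hk1]; ring
    simp only [hc]
    have h2 : 2*((k:ℝ)-1)+1 = 2*(k:ℝ)-1 := by ring
    rw [h2]
    have := le_log_diff k hk1
    rw [show (2:ℝ)/(2*(k:ℝ)+1) = 2 * (1/(2*(k:ℝ)+1)) from by ring] at this
    linarith
  rw [telescope (fun j : ℕ => (1/2) * Real.log (2*(j:ℝ)+1)) i0 n h] at key
  linarith

lemma sum_inv_lower (hi0 : 0 < i0) (n : ℕ) (h : i0 ≤ n) :
    (1/2) * (Real.log (2*(n:ℝ)+3) - Real.log (2*(i0:ℝ)+3))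
      ≤ ∑ k ∈ Finset.Icc (i0+1) n, (1:ℝ)/(2*(k:ℝ)+1) := by
  have key : ∑ k ∈ Finset.Icc (i0+1) n,
        ((fun j : ℕ => (1/2) * Real.log (2*(j:ℝ)+3)) k - (fun j : ℕ => (1/2) * Real.log (2*(j:ℝ)+3)) (k-1))
      ≤ ∑ k ∈ Finset.Icc (i0+1) n, (1:ℝ)/(2*(k:ℝ)+1) := by
    apply Finset.sum_le_sum
    intro k hk
    simp only [Finset.mem_Icc] at hk
    have hk1 : 1 ≤ k := by omega
    have hc : ((k - 1 : ℕ) : ℝ) = (k:ℝ) - 1 := by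
      have : (1:ℝ) ≤ (k:ℝ) := by exact_mod_cast hk1
      push_cast [hk1]; ring
    simp only [hc]
    have h2 : 2*((k:ℝ)-1)+3 = 2*(k:ℝ)+1 := by ring
    rw [h2]
    have := log_diff_le k hk1
    rw [show (2:ℝ)/(2*(k:ℝ)+1) = 2 * (1/(2*(k:ℝ)+1)) from by ring] at this
    linarith
  rw [telescope (fun j : ℕ => (1/2) * Real.log (2*(j:ℝ)+3)) i0 n h] at key
  linarith

lemma eN_bound (hi0 : 0 < i0) :
    ∃ C : ℝ, 0 < C ∧ ∀ n, i0 ≤ n → 1 ≤ n →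
      |eN i0 n - (1/2) * Real.log n| ≤ C := by
  have hl4 : (0:ℝ) ≤ Real.log (2*(i0:ℝ)+3) := by
    apply Real.log_nonneg
    have : (0:ℝ) ≤ (i0:ℝ) := Nat.cast_nonneg i0
    linarith
  have hl5 : (0:ℝ) ≤ Real.log 3 := Real.log_nonneg (by norm_num)
  refine ⟨1 + Real.log (2*(i0:ℝ)+3) + Real.log 3, by linarith, ?_⟩
  intro n hn h1n
  have hn1 : (1:ℝ) ≤ (n:ℝ) := by exact_mod_cast h1n
  have hn0 : (0:ℝ) < (n:ℝ) := by linarith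
  have hfrac0 : (0:ℝ) ≤ ((i0:ℝ)+1)/(2*(i0:ℝ)+1) := by positivity
  have hfrac1 : ((i0:ℝ)+1)/(2*(i0:ℝ)+1) ≤ 1 := by
    rw [div_le_one (by positivity)]
    have : (1:ℝ) ≤ (i0:ℝ) := by exact_mod_cast hi0
    linarith
  have hup := sum_inv_upper i0 hi0 n hn
  have hlo := sum_inv_lower i0 hi0 n hn
  have hlog1 : Real.log (2*(n:ℝ)+1) ≤ Real.log 3 + Real.log n := by
    rw [← Real.log_mul (by norm_num) (ne_of_gt hn0)]
    apply Real.log_le_log (by positivity)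
    linarith
  have hlog2 : Real.log (n:ℝ) ≤ Real.log (2*(n:ℝ)+3) := by
    apply Real.log_le_log hn0
    linarith
  have hlog3 : (0:ℝ) ≤ Real.log (2*(i0:ℝ)+1) := by
    apply Real.log_nonneg
    have : (1:ℝ) ≤ (i0:ℝ) := by exact_mod_cast hi0
    linarith
  have hlog4 : (0:ℝ) ≤ Real.log (2*(i0:ℝ)+3) := by
    apply Real.log_nonneg
    have : (0:ℝ) ≤ (i0:ℝ) := Nat.cast_nonneg i0
    linarith
  have hlog5 : (0:ℝ) ≤ Real.log 3 := Real.log_nonneg (by norm_num)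
  rw [abs_le]
  unfold eN
  constructor
  · nlinarith [hlo]
  · nlinarith [hup]

lemma tendsto_logn : Tendsto (fun n : ℕ => Real.log n) atTop atTop :=
  Real.tendsto_log_atTop.comp tendsto_natCast_atTop_atTop

lemma D_ratio (hi0 : 0 < i0) :
    Tendsto (fun n : ℕ => Dn (mSeq (pB 1 i0)) n / ((n:ℝ) * Real.log n)) atTop (nhds 1) := by
  obtain ⟨C, hC, hCb⟩ := eN_bound i0 hi0
  have hE : Tendsto (fun n : ℕ => (eN i0 n - (1/2)*Real.log n) / Real.log n) atTop (nhds 0) := by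
    apply squeeze_zero_norm' (a := fun n : ℕ => C * (Real.log n)⁻¹)
    · filter_upwards [eventually_ge_atTop (max i0 1), tendsto_logn.eventually_ge_atTop 1]
        with n h1 h2
      have hlpos : (0:ℝ) < Real.log n := by linarith
      rw [Real.norm_eq_abs, abs_div, abs_of_pos hlpos, div_le_iff₀ hlpos]
      have := hCb n (le_trans (le_max_left _ _) h1) (le_trans (le_max_right _ _) h1)
      calc |eN i0 n - 1/2 * Real.log n| ≤ C := this
      _ ≤ C * (Real.log n)⁻¹ * Real.log n := by
          rw [mul_assoc, inv_mul_cancel₀ (ne_of_gt hlpos), mul_one]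
    · have := tendsto_logn.inv_tendsto_atTop
      simpa using this.const_mul C
  have h2 : Tendsto (fun n : ℕ =>
      (2 + ((n:ℝ))⁻¹) * (1/2 + (eN i0 n - (1/2)*Real.log n) / Real.log n)) atTop (nhds 1) := by
    have ha : Tendsto (fun n : ℕ => (2:ℝ) + ((n:ℝ))⁻¹) atTop (nhds 2) := by
      have : Tendsto (fun n : ℕ => ((n:ℝ))⁻¹) atTop (nhds 0) :=
        tendsto_inv_atTop_zero.comp tendsto_natCast_atTop_atTop
      simpa using tendsto_const_nhds.add this
    have hb : Tendsto (fun n : ℕ =>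
        (1:ℝ)/2 + (eN i0 n - (1/2)*Real.log n) / Real.log n) atTop (nhds (1/2)) := by
      simpa using tendsto_const_nhds.add hE
    have := ha.mul hb
    norm_num at this
    exact this
  apply h2.congr'
  filter_upwards [eventually_ge_atTop (max i0 2), tendsto_logn.eventually_ge_atTop 1]
    with n h1 h2
  have hni0 : i0 ≤ n := le_trans (le_max_left _ _) h1
  have hn2 : 2 ≤ n := le_trans (le_max_right _ _) h1
  have hn0 : (0:ℝ) < (n:ℝ) := by
    have : (2:ℝ) ≤ (n:ℝ) := by exact_mod_cast hn2
    linarith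
  have hlpos : (0:ℝ) < Real.log n := by linarith
  rw [Dn_closed i0 hi0 n hni0]
  field_simp
  ring

lemma geomS_mul_tendsto (hi0 : 0 < i0) (a : ℕ) :
    Tendsto (fun n : ℕ => geomS (pB 1 i0) n a * ((n:ℝ) * Real.log n)) atTop (nhds 1) := by
  have hm := hm_of_hp _ (pB_prop i0 hi0)
  have hDge : ∀ n : ℕ, (n:ℝ) + 1 ≤ Dn (mSeq (pB 1 i0)) n := Dn_ge _ hm
  have hDpos : ∀ n : ℕ, (0:ℝ) < Dn (mSeq (pB 1 i0)) n := by
    intro n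
    have h0 : (0:ℝ) ≤ (n:ℝ) := Nat.cast_nonneg n
    linarith [hDge n]
  have hinv : Tendsto (fun n : ℕ => ((n:ℝ) * Real.log n) / Dn (mSeq (pB 1 i0)) n)
      atTop (nhds 1) := by
    have := (D_ratio i0 hi0).inv₀ one_ne_zero
    rw [inv_one] at this
    apply this.congr
    intro n
    rw [inv_div]
  have hone : Tendsto (fun n : ℕ => 1 / Dn (mSeq (pB 1 i0)) n) atTop (nhds 0) := by
    apply squeeze_zero_norm' (a := fun n : ℕ => 1/((n:ℝ)+1))
    · filter_upwards with n
      rw [Real.norm_eq_abs, abs_of_pos (div_pos one_pos (hDpos n))]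
      exact one_div_le_one_div_of_le (by positivity) (hDge n)
    · exact tendsto_one_div_add_atTop_nhds_zero_nat
  have hpow : Tendsto (fun n : ℕ => (1 - 1 / Dn (mSeq (pB 1 i0)) n)^a) atTop (nhds 1) := by
    have := ((tendsto_const_nhds (x := (1:ℝ))).sub hone).pow a
    norm_num at this
    simpa [one_div] using this
  have := hpow.mul hinv
  rw [mul_one] at this
  apply this.congr
  intro n
  rw [geomS]
  ring



def Ln (N : ℕ) : ℝ := Real.log (Real.log N)

lemma tendsto_logn' : Tendsto (fun n : ℕ => Real.log n) atTop atTop :=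
  Real.tendsto_log_atTop.comp tendsto_natCast_atTop_atTop

lemma Ln_tendsto : Tendsto Ln atTop atTop :=
  Real.tendsto_log_atTop.comp tendsto_logn'

lemma log_ratio_le {x y : ℝ} (hx : 0 < x) (hxy : x ≤ y) :
    Real.log y - Real.log x ≤ (y - x) / x := by
  have hy : 0 < y := lt_of_lt_of_le hx hxy
  have := Real.log_le_sub_one_of_pos (show (0:ℝ) < y/x by positivity)
  rw [Real.log_div (ne_of_gt hy) (ne_of_gt hx)] at this
  have heq : y/x - 1 = (y - x)/x := by field_simp
  linarith [heq ▸ this]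

lemma le_log_ratio {x y : ℝ} (hx : 0 < x) (hxy : x ≤ y) :
    (y - x) / y ≤ Real.log y - Real.log x := by
  have hy : 0 < y := lt_of_lt_of_le hx hxy
  have := Real.log_le_sub_one_of_pos (show (0:ℝ) < x/y by positivity)
  rw [Real.log_div (ne_of_gt hx) (ne_of_gt hy)] at this
  have heq : x/y - 1 = -((y - x)/y) := by field_simp; ring
  linarith [heq ▸ this]

lemma Ln_diff_le (n : ℕ) (hn : 2 ≤ n) :
    Ln (n+1) - Ln n ≤ 1/((n:ℝ) * Real.log n) := by
  have hx : (2:ℝ) ≤ (n:ℝ) := by exact_mod_cast hn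
  have hx0 : (0:ℝ) < (n:ℝ) := by linarith
  have hl : (0:ℝ) < Real.log n := Real.log_pos (by linarith)
  have hl1 : Real.log (n:ℝ) ≤ Real.log ((n:ℝ)+1) := Real.log_le_log hx0 (by linarith)
  have hcast : ((n+1:ℕ):ℝ) = (n:ℝ)+1 := by push_cast; ring
  have k1 : Real.log ((n:ℝ)+1) - Real.log n ≤ 1/(n:ℝ) := by
    have := log_ratio_le hx0 (show (n:ℝ) ≤ (n:ℝ)+1 by linarith)
    simpa using this
  calc Ln (n+1) - Ln n
      = Real.log (Real.log ((n:ℝ)+1)) - Real.log (Real.log n) := by rw [Ln, Ln, hcast]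
  _ ≤ (Real.log ((n:ℝ)+1) - Real.log n)/Real.log n := log_ratio_le hl hl1
  _ ≤ (1/(n:ℝ))/Real.log n := div_le_div_of_nonneg_right k1 (le_of_lt hl)
  _ = 1/((n:ℝ)*Real.log n) := by rw [div_div]

lemma le_Ln_diff (n : ℕ) (hn : 2 ≤ n) :
    1/(((n:ℝ)+1) * Real.log ((n:ℝ)+1)) ≤ Ln (n+1) - Ln n := by
  have hx : (2:ℝ) ≤ (n:ℝ) := by exact_mod_cast hn
  have hx0 : (0:ℝ) < (n:ℝ) := by linarith
  have hl : (0:ℝ) < Real.log n := Real.log_pos (by linarith)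
  have hl1 : Real.log (n:ℝ) ≤ Real.log ((n:ℝ)+1) := Real.log_le_log hx0 (by linarith)
  have hl1p : (0:ℝ) < Real.log ((n:ℝ)+1) := lt_of_lt_of_le hl hl1
  have hcast : ((n+1:ℕ):ℝ) = (n:ℝ)+1 := by push_cast; ring
  have k1 : 1/((n:ℝ)+1) ≤ Real.log ((n:ℝ)+1) - Real.log n := by
    have := le_log_ratio hx0 (show (n:ℝ) ≤ (n:ℝ)+1 by linarith)
    simpa using this
  calc 1/(((n:ℝ)+1) * Real.log ((n:ℝ)+1))
      = (1/((n:ℝ)+1))/Real.log ((n:ℝ)+1) := by rw [div_div]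
  _ ≤ (Real.log ((n:ℝ)+1) - Real.log n)/Real.log ((n:ℝ)+1) :=
      div_le_div_of_nonneg_right k1 (le_of_lt hl1p)
  _ ≤ Real.log (Real.log ((n:ℝ)+1)) - Real.log (Real.log n) := le_log_ratio hl hl1
  _ = Ln (n+1) - Ln n := by rw [Ln, Ln, hcast]

lemma sumw_lower (M : ℕ) (hM : 2 ≤ M) :
    ∀ N, M ≤ N → Ln N - Ln M ≤ ∑ n ∈ Finset.Ico M N, 1/((n:ℝ) * Real.log n) := by
  intro N
  induction N with
  | zero => intro h; omega
  | succ n ih =>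
    intro h
    rcases Nat.lt_or_ge n M with hlt | hge
    · have : M = n + 1 := by omega
      subst this
      simp
    · rw [Finset.sum_Ico_succ_top hge]
      have := Ln_diff_le n (by omega)
      have := ih hge
      linarith

lemma sumw_upper (M : ℕ) (hM : 2 ≤ M) :
    ∀ N, M ≤ N → ∑ n ∈ Finset.Icc (M+1) N, 1/((n:ℝ) * Real.log n) ≤ Ln N - Ln M := by
  intro N
  induction N with
  | zero => intro h; omega
  | succ n ih =>
    intro h
    rcases Nat.lt_or_ge n M with hlt | hge
    · have : M = n + 1 := by omega
      subst this
      rw [Finset.Icc_eq_empty (by omega)]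
      simp
    · rw [Finset.sum_Icc_succ_top (by omega : M + 1 ≤ n + 1)]
      have h1 := le_Ln_diff n (by omega)
      have h2 := ih hge
      have hcast : ((n+1:ℕ):ℝ) = (n:ℝ)+1 := by push_cast; ring
      rw [hcast]
      linarith

lemma sum_div_loglog (u : ℕ → ℝ) (hu : ∀ n, 0 ≤ u n)
    (hU : Tendsto (fun n : ℕ => u n * ((n:ℝ) * Real.log n)) atTop (nhds 1)) :
    Tendsto (fun N : ℕ => (∑ i ∈ Finset.Icc 1 N, u i) / Ln N) atTop (nhds 1) := by
  have wpos : ∀ n : ℕ, 3 ≤ n → (0:ℝ) < (n:ℝ) * Real.log n := by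
    intro n hn
    have hx : (3:ℝ) ≤ (n:ℝ) := by exact_mod_cast hn
    have : (0:ℝ) < Real.log n := Real.log_pos (by linarith)
    nlinarith
  rw [tendsto_order]
  constructor
  · intro c hc
    rcases lt_or_ge c 0 with hc0 | hc0
    · filter_upwards [Ln_tendsto.eventually_gt_atTop 0] with N hN
      calc c < 0 := hc0
      _ ≤ _ := div_nonneg (Finset.sum_nonneg fun i _ => hu i) hN.le
    · set ε := (1 - c)/2 with hεdef
      have hε : 0 < ε := by rw [hεdef]; linarith
      have hε1 : ε ≤ 1/2 := by rw [hεdef]; linarith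
      have hcε : c = 1 - 2*ε := by rw [hεdef]; ring
      obtain ⟨M0, hM0⟩ := eventually_atTop.mp (hU.eventually_const_lt (by linarith : 1 - ε < 1))
      set M := max M0 3 with hMdef
      have hM3 : 3 ≤ M := le_max_right _ _
      have hw : ∀ n, M ≤ n → (1-ε) * (1/((n:ℝ) * Real.log n)) ≤ u n := by
        intro n hn
        have h3 : 3 ≤ n := le_trans hM3 hn
        have hX := wpos n h3
        have := hM0 n (le_trans (le_max_left _ _) hn)
        rw [mul_one_div, div_le_iff₀ hX]
        linarith
      filter_upwards [eventually_ge_atTop M,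
        Ln_tendsto.eventually_ge_atTop (max 1 ((1-ε) * |Ln M| / ε + 1))] with N hNM hNL
      have hLN1 : 1 ≤ Ln N := le_trans (le_max_left _ _) hNL
      have hLN0 : 0 < Ln N := by linarith
      have hLNe : (1-ε) * |Ln M| / ε + 1 ≤ Ln N := le_trans (le_max_right _ _) hNL
      have hsum1 := sumw_lower M (by omega) N hNM
      have hsum2 : (1-ε) * ∑ n ∈ Finset.Ico M N, 1/((n:ℝ) * Real.log n)
          ≤ ∑ n ∈ Finset.Ico M N, u n := by
        rw [Finset.mul_sum]
        apply Finset.sum_le_sum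
        intro n hn
        simp only [Finset.mem_Ico] at hn
        exact hw n hn.1
      have hsub : ∑ n ∈ Finset.Ico M N, u n ≤ ∑ i ∈ Finset.Icc 1 N, u i := by
        apply Finset.sum_le_sum_of_subset_of_nonneg
        · intro x hx
          simp only [Finset.mem_Ico, Finset.mem_Icc] at hx ⊢
          omega
        · intro i _ _; exact hu i
      rw [lt_div_iff₀ hLN0]
      have habs : (1-ε) * Ln M ≤ (1-ε) * |Ln M| :=
        mul_le_mul_of_nonneg_left (le_abs_self _) (by linarith)
      have hεLN : (1-ε) * |Ln M| + ε ≤ ε * Ln N := by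
        rw [div_add' _ _ _ (ne_of_gt hε), div_le_iff₀ hε] at hLNe
        linarith [mul_comm ε (Ln N)]
      nlinarith [hsum1, hsum2, hsub]
  · intro c hc
    set ε := (c - 1)/2 with hεdef
    have hε : 0 < ε := by rw [hεdef]; linarith
    have hcε : c = 1 + 2*ε := by rw [hεdef]; ring
    obtain ⟨M0, hM0⟩ := eventually_atTop.mp (hU.eventually_lt_const (by linarith : 1 < 1 + ε))
    set M := max M0 3 with hMdef
    have hM3 : 3 ≤ M := le_max_right _ _
    have hw : ∀ n, M ≤ n → u n ≤ (1+ε) * (1/((n:ℝ) * Real.log n)) := by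
      intro n hn
      have h3 : 3 ≤ n := le_trans hM3 hn
      have hX := wpos n h3
      have := hM0 n (le_trans (le_max_left _ _) hn)
      rw [mul_one_div, le_div_iff₀ hX]
      linarith
    set A := ∑ i ∈ Finset.Icc 1 M, u i with hAdef
    have hA0 : 0 ≤ A := Finset.sum_nonneg fun i _ => hu i
    filter_upwards [eventually_ge_atTop M,
      Ln_tendsto.eventually_ge_atTop (max 1 ((A + (1+ε) * |Ln M|) / ε + 1))] with N hNM hNL
    have hLN1 : 1 ≤ Ln N := le_trans (le_max_left _ _) hNL
    have hLN0 : 0 < Ln N := by linarith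
    have hLNe : (A + (1+ε) * |Ln M|) / ε + 1 ≤ Ln N := le_trans (le_max_right _ _) hNL
    have hsplit : ∑ i ∈ Finset.Icc 1 N, u i = A + ∑ i ∈ Finset.Icc (M+1) N, u i := by
      rw [hAdef, ← Finset.sum_union]
      · congr 1
        ext x
        simp only [Finset.mem_union, Finset.mem_Icc]
        omega
      · rw [Finset.disjoint_left]
        intro x hx1 hx2
        simp only [Finset.mem_Icc] at hx1 hx2
        omega
    have hsum2 : ∑ i ∈ Finset.Icc (M+1) N, u i
        ≤ (1+ε) * ∑ n ∈ Finset.Icc (M+1) N, 1/((n:ℝ) * Real.log n) := by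
      rw [Finset.mul_sum]
      apply Finset.sum_le_sum
      intro n hn
      simp only [Finset.mem_Icc] at hn
      exact hw n (by omega)
    have hsum1 := sumw_upper M (by omega) N hNM
    rw [div_lt_iff₀ hLN0]
    have habs : -((1+ε) * |Ln M|) ≤ (1+ε) * Ln M := by
      have := neg_abs_le (Ln M)
      nlinarith
    have hεLN : A + (1+ε) * |Ln M| + ε ≤ ε * Ln N := by
      rw [div_add' _ _ _ (ne_of_gt hε), div_le_iff₀ hε] at hLNe
      linarith [mul_comm ε (Ln N)]
    nlinarith [hsum1, hsum2]


/-- If `B = 1`, then `E|C ∩ [1,n]| / log log n → 1`. -/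
theorem stmt7 {Ω : Type*} [MeasurableSpace Ω] (P : Measure Ω) [IsProbabilityMeasure P]
    (B : ℝ) (hB : B = 1) (i0 : ℕ) (hi0 : 0 < i0) (hBi0 : B / (4 * i0) < 1 / 2)
    (Z : ℕ → Ω → ℕ) (hZ : IsBPVEI P (pB B i0) Z) (a : ℕ) :
    Tendsto (fun n : ℕ =>
        (∫ ω, ((((Finset.Icc 1 n).filter fun i => Z i ω = a).card : ℝ)) ∂P) /
          Real.log (Real.log n)) atTop (nhds 1) := by
  subst hB
  have hp := pB_prop i0 hi0
  have key : ∀ (n : ℕ), (∫ ω, ((((Finset.Icc 1 n).filter fun i => Z i ω = a).card : ℝ)) ∂P)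
      = ∑ i ∈ Finset.Icc 1 n, geomS (pB 1 i0) i a := by
    intro n
    have hcard : ∀ ω : Ω, ((((Finset.Icc 1 n).filter fun i => Z i ω = a).card : ℝ))
        = ∑ i ∈ Finset.Icc 1 n, Set.indicator ((Z i) ⁻¹' {a}) (fun _ => (1:ℝ)) ω := by
      intro ω
      rw [Finset.card_filter, Nat.cast_sum]
      apply Finset.sum_congr rfl
      intro i _
      by_cases h : Z i ω = a <;>
        simp [h, Set.indicator_apply, Set.mem_preimage, Set.mem_singleton_iff]
    rw [integral_congr_ae (Eventually.of_forall hcard),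
      integral_finset_sum _ (fun i _ =>
        (integrable_const (1:ℝ)).indicator ((hZ.1 i) (measurableSet_singleton a)))]
    apply Finset.sum_congr rfl
    intro i _
    rw [integral_indicator_const (1:ℝ) ((hZ.1 i) (measurableSet_singleton a))]
    rw [smul_eq_mul, mul_one]
    exact marginal P (pB 1 i0) hp Z hZ i a
  have main := sum_div_loglog (fun i => geomS (pB 1 i0) i a)
    (fun n => geomS_nonneg _ hp n a) (geomS_mul_tendsto i0 hi0 a)
  apply main.congr
  intro N
  rw [key N, Ln]
end
end

section
/- Suppose $m_j \to 1$ as $j \to \infty$. Then for each $\sigma > 0$ there exist $N_1 > 0$ and $M_1 > 0$ (independent of $k$) such that for all integers $k > N_1$ and $n > M_1$: $1 < \dfrac{D(k,k+n)}{D(k+1,k+n)} < 1 + \sigma$. -/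
open Filter Finset

noncomputable section

lemma one_le_prod_real {s : Finset ℕ} {f : ℕ → ℝ} (h : ∀ i ∈ s, 1 ≤ f i) :
    1 ≤ ∏ i ∈ s, f i := by
  calc (1 : ℝ) = ∏ _i ∈ s, 1 := Finset.prod_const_one.symm
    _ ≤ ∏ i ∈ s, f i := Finset.prod_le_prod (fun _ _ => zero_le_one) h

/-- If `m_j → 1`, then for each `σ > 0` there exist `N₁, M₁ > 0` independent of `k`
such that `1 < D(k, k+n)/D(k+1, k+n) < 1 + σ` for all `k > N₁`, `n > M₁`. -/
theorem stmt12 (m : ℕ → ℝ) (hm : ∀ j, 1 ≤ j → 1 ≤ m j)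
    (hlim : Tendsto m atTop (nhds 1)) (σ : ℝ) (hσ : 0 < σ) :
    ∃ N₁ M₁ : ℕ, 0 < N₁ ∧ 0 < M₁ ∧ ∀ k n : ℕ, N₁ < k → M₁ < n →
      1 < Dkn m k (k + n) / Dkn m (k + 1) (k + n) ∧
      Dkn m k (k + n) / Dkn m (k + 1) (k + n) < 1 + σ := by
  set ε : ℝ := σ / 4 with hεdef
  have hε : 0 < ε := by positivity
  have hε1 : (1 : ℝ) < 1 + ε := by linarith
  have h1 : ∀ᶠ j in atTop, m j < 1 + ε := hlim.eventually (eventually_lt_nhds hε1)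
  obtain ⟨N₀, hN₀⟩ := eventually_atTop.mp h1
  set r : ℝ := 1 / (1 + ε) with hrdef
  have hr0 : 0 < r := by positivity
  have hr1 : r < 1 := by
    rw [hrdef, div_lt_one (by linarith)]; linarith
  obtain ⟨M₀, hM₀⟩ := exists_pow_lt_of_lt_one (show (0 : ℝ) < 1 / 2 by norm_num) hr1
  refine ⟨N₀ + 1, M₀ + 1, Nat.succ_pos _, Nat.succ_pos _, ?_⟩
  intro k n hk hn
  have hmlt : ∀ i, k ≤ i → m i < 1 + ε := fun i hi => hN₀ i (by omega)
  have hmge : ∀ i, k ≤ i → 1 ≤ m i := fun i hi => hm i (by omega)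
  set N := k + n with hN
  set Q : ℝ := ∏ i ∈ Finset.Ioc k N, m i with hQdef
  have hQ1 : (1 : ℝ) ≤ Q := by
    rw [hQdef]
    exact one_le_prod_real fun i hi => hmge i (le_of_lt (Finset.mem_Ioc.mp hi).1)
  set P : ℝ := ∏ i ∈ Finset.Icc k N, m i with hPdef
  have hPQ : P = m k * Q := by
    rw [hPdef, Finset.Icc_eq_cons_Ioc (by omega), Finset.prod_cons]
  have hP1 : (1 : ℝ) ≤ P := by
    rw [hPQ]
    nlinarith [hmge k le_rfl, hQ1]
  have hPle : P ≤ (1 + ε) * Q := by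
    rw [hPQ]
    exact mul_le_mul_of_nonneg_right (le_of_lt (hmlt k le_rfl)) (by linarith)
  set S : ℝ := ∑ j ∈ Finset.Icc (k + 1) N, ∏ i ∈ Finset.Icc j N, m i with hSdef
  have hD2 : Dkn m (k + 1) N = 1 + S := rfl
  have hD1 : Dkn m k N = 1 + S + P := by
    show 1 + ∑ j ∈ Finset.Icc k N, ∏ i ∈ Finset.Icc j N, m i = 1 + S + P
    rw [Finset.Icc_eq_cons_Ioc (show k ≤ N by omega), Finset.sum_cons, ← hPdef, hSdef,
      ← Finset.Icc_add_one_left_eq_Ioc]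
    ring
  -- termwise geometric lower bound
  have hterm : ∀ t ∈ Finset.range n, Q * r ^ t ≤ ∏ i ∈ Finset.Icc (k + 1 + t) N, m i := by
    intro t ht
    have htn : t ≤ n := le_of_lt (Finset.mem_range.mp ht)
    have hsplit2 : (∏ i ∈ Finset.Ioc k (k + t), m i) * (∏ i ∈ Finset.Ioc (k + t) N, m i) = Q :=
      Finset.prod_Ioc_consecutive _ (by omega) (by omega)
    have hA : (∏ i ∈ Finset.Ioc k (k + t), m i) ≤ (1 + ε) ^ t := by
      calc (∏ i ∈ Finset.Ioc k (k + t), m i) ≤ ∏ _i ∈ Finset.Ioc k (k + t), (1 + ε) :=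
            Finset.prod_le_prod
              (fun i hi => by linarith [hmge i (le_of_lt (Finset.mem_Ioc.mp hi).1)])
              (fun i hi => le_of_lt (hmlt i (le_of_lt (Finset.mem_Ioc.mp hi).1)))
        _ = (1 + ε) ^ t := by rw [Finset.prod_const, Nat.card_Ioc]; congr 1; omega
    have hB1 : (1 : ℝ) ≤ ∏ i ∈ Finset.Ioc (k + t) N, m i :=
      one_le_prod_real fun i hi => hmge i (by have := (Finset.mem_Ioc.mp hi).1; omega)
    have hIcc : Finset.Icc (k + 1 + t) N = Finset.Ioc (k + t) N := by
      rw [← Finset.Icc_add_one_left_eq_Ioc]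
      congr 1
      omega
    rw [hIcc, ← hsplit2]
    have hpow : (0 : ℝ) < (1 + ε) ^ t := by positivity
    have hrt : r ^ t = ((1 + ε) ^ t)⁻¹ := by rw [hrdef, one_div, inv_pow]
    rw [hrt]
    set B : ℝ := ∏ i ∈ Finset.Ioc (k + t) N, m i
    calc (∏ i ∈ Finset.Ioc k (k + t), m i) * B * ((1 + ε) ^ t)⁻¹
        ≤ (1 + ε) ^ t * B * ((1 + ε) ^ t)⁻¹ := by
          have hBnn : (0 : ℝ) ≤ B := by linarith
          have := mul_le_mul_of_nonneg_right
            (mul_le_mul_of_nonneg_right hA hBnn) (inv_nonneg.mpr hpow.le)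
          exact this
      _ = B := by
          rw [mul_comm ((1 + ε) ^ t) B, mul_assoc, mul_inv_cancel₀ hpow.ne', mul_one]
  have hrn : r ^ n < 1 / 2 :=
    lt_of_le_of_lt (pow_le_pow_of_le_one hr0.le hr1.le (by omega)) hM₀
  have hgeom : (1 + ε) / (2 * ε) ≤ ∑ t ∈ Finset.range n, r ^ t := by
    rw [geom_sum_eq (ne_of_lt hr1) n]
    have heq : (r ^ n - 1) / (r - 1) = (1 - r ^ n) / (1 - r) := by
      rw [← neg_div_neg_eq]; ring_nf
    rw [heq]
    have h1r : (0 : ℝ) < 1 - r := by linarith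
    rw [div_le_div_iff₀ (by positivity) h1r]
    have h1rval : 1 - r = ε / (1 + ε) := by
      rw [hrdef]; field_simp; ring
    rw [h1rval]
    have hLHS : (1 + ε) * (ε / (1 + ε)) = ε := by field_simp
    rw [hLHS]
    nlinarith [hrn, hε]
  have hSge : Q * ((1 + ε) / (2 * ε)) ≤ S := by
    have hc1 : Q * ((1 + ε) / (2 * ε)) ≤ Q * ∑ t ∈ Finset.range n, r ^ t :=
      mul_le_mul_of_nonneg_left hgeom (by linarith)
    have hc2 : Q * ∑ t ∈ Finset.range n, r ^ t = ∑ t ∈ Finset.range n, Q * r ^ t :=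
      Finset.mul_sum _ _ _
    have hc3 : (∑ t ∈ Finset.range n, Q * r ^ t)
        ≤ ∑ t ∈ Finset.range n, ∏ i ∈ Finset.Icc (k + 1 + t) N, m i :=
      Finset.sum_le_sum hterm
    have hc4 : (∑ t ∈ Finset.range n, ∏ i ∈ Finset.Icc (k + 1 + t) N, m i) = S := by
      rw [hSdef, ← Finset.Ico_add_one_right_eq_Icc, Finset.sum_Ico_eq_sum_range]
      apply Finset.sum_congr
      · congr 1
        omega
      · intro x _
        rfl
    linarith [hc1, hc2 ▸ hc1, hc3, hc4 ▸ hc3]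
  have hS0 : (0 : ℝ) ≤ S := by
    have : (0 : ℝ) ≤ Q * ((1 + ε) / (2 * ε)) := by positivity
    linarith
  have h2 : (1 + ε) * Q ≤ S * (2 * ε) := by
    have h := hSge
    rw [← mul_div_assoc] at h
    rw [div_le_iff₀ (by positivity)] at h
    linarith
  have hPσ : P < σ * (1 + S) := by
    have h2ε : 2 * ε = σ / 2 := by rw [hεdef]; ring
    nlinarith [hPle, h2, hσ, hS0]
  have hD2pos : (0 : ℝ) < 1 + S := by linarith
  constructor
  · rw [hD1, hD2, lt_div_iff₀ hD2pos]
    linarith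
  · rw [hD1, hD2, div_lt_iff₀ hD2pos]
    nlinarith [hPσ, hS0, hσ]
end
end

section
/- Fix integers $k \ge 1$ and $l \ge 1$. Then $\lim_{n\to\infty} \dfrac{1}{(\log n)^{k}} \sum \dfrac{1}{j_1 (j_2-j_1)\cdots(j_k-j_{k-1})} = 1$, where the sum ranges over all integer tuples $(j_1,\dots,j_k)$ with $l \le j_1 < j_2 < \cdots < j_k \le n$ and $j_{i+1} - j_i > l$ for every $i = 1,\dots,k-1$. -/
open Filter Finset

open scoped Classical

section Aux

variable (k l : ℕ)

/-- differences of a tuple -/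
noncomputable def toD (j : Fin k → ℕ) : Fin k → ℕ := fun i =>
  j i - (if i.1 = 0 then 0 else j ⟨i.1 - 1, Nat.lt_of_le_of_lt (Nat.sub_le _ _) i.2⟩)

/-- partial sums of a tuple -/
noncomputable def toJ (j : Fin k → ℕ) : Fin k → ℕ := fun i =>
  ∑ m : Fin k, if m ≤ i then j m else 0

variable {k l}

lemma toJ_zero (hk : 1 ≤ k) (d : Fin k → ℕ) : toJ k d ⟨0, hk⟩ = d ⟨0, hk⟩ := by
  rw [toJ]
  rw [Finset.sum_eq_single (⟨0, hk⟩ : Fin k)]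
  · simp
  · intro m _ hm
    rw [if_neg]
    intro h
    exact hm (le_antisymm h (Fin.mk_le_mk.mpr (Nat.zero_le _)))
  · simp

lemma toJ_succ (p : ℕ) (hp : p + 1 < k) (d : Fin k → ℕ) :
    toJ k d ⟨p + 1, hp⟩ = toJ k d ⟨p, by omega⟩ + d ⟨p + 1, hp⟩ := by
  rw [toJ, toJ, ← Finset.sum_filter, ← Finset.sum_filter]
  have hins : Finset.univ.filter (fun m : Fin k => m ≤ (⟨p + 1, hp⟩ : Fin k)) =
      insert (⟨p + 1, hp⟩ : Fin k)
        (Finset.univ.filter (fun m : Fin k => m ≤ (⟨p, by omega⟩ : Fin k))) := by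
    ext m
    simp only [Finset.mem_filter, Finset.mem_univ, true_and, Finset.mem_insert,
      Fin.le_def, Fin.ext_iff]
    omega
  rw [hins, Finset.sum_insert (by simp [Fin.le_def]), add_comm]

lemma toJ_mono (d : Fin k → ℕ) {i i' : Fin k} (h : i ≤ i') : toJ k d i ≤ toJ k d i' := by
  apply Finset.sum_le_sum
  intro m _
  by_cases hm : m ≤ i
  · rw [if_pos hm, if_pos (hm.trans h)]
  · rw [if_neg hm]
    positivity

lemma toJ_le_sum (d : Fin k → ℕ) (i : Fin k) : toJ k d i ≤ ∑ m, d m := by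
  apply Finset.sum_le_sum
  intro m _
  split <;> simp

lemma toJ_last (hk : 1 ≤ k) (d : Fin k → ℕ) :
    toJ k d ⟨k - 1, by omega⟩ = ∑ m, d m := by
  apply Finset.sum_congr rfl
  intro m _
  rw [if_pos]
  rw [Fin.le_def]
  exact Nat.le_sub_one_of_lt m.2

lemma toJ_toD (hk : 1 ≤ k) (j : Fin k → ℕ)
    (hmono : ∀ i₁ i₂ : Fin k, i₁ < i₂ → j i₁ < j i₂) :
    toJ k (toD k j) = j := by
  funext i
  obtain ⟨p, hp⟩ := i
  induction p with
  | zero =>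
      rw [toJ_zero hk, toD]
      simp
  | succ q ih =>
      rw [toJ_succ q hp, ih (by omega)]
      have h1 : j ⟨q, by omega⟩ ≤ j ⟨q + 1, hp⟩ :=
        (hmono ⟨q, by omega⟩ ⟨q + 1, hp⟩ (by simp [Fin.lt_def])).le
      rw [toD]
      simp only [if_neg (Nat.succ_ne_zero q), Nat.add_sub_cancel]
      omega

lemma toD_toJ (hk : 1 ≤ k) (d : Fin k → ℕ) : toD k (toJ k d) = d := by
  funext i
  obtain ⟨p, hp⟩ := i
  rw [toD]
  rcases Nat.eq_zero_or_pos p with h0 | h0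
  · subst h0
    simp [toJ_zero hk]
  · obtain ⟨q, rfl⟩ := Nat.exists_eq_add_of_lt h0
    simp only [Nat.zero_add] at *
    rw [if_neg (Nat.succ_ne_zero q), toJ_succ q (by omega)]
    simp

end Aux

lemma tendsto_div_log (c₁ c₂ : ℝ) (f : ℕ → ℝ)
    (hf : ∀ᶠ n : ℕ in atTop, Real.log n - c₁ ≤ f n ∧ f n ≤ Real.log n + c₂) :
    Tendsto (fun n : ℕ => f n / Real.log n) atTop (nhds 1) := by
  have hlog : Tendsto (fun n : ℕ => Real.log n) atTop atTop :=
    Real.tendsto_log_atTop.comp tendsto_natCast_atTop_atTop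
  have h1 : Tendsto (fun n : ℕ => 1 - c₁ / Real.log n) atTop (nhds 1) := by
    have := (tendsto_const_nhds (x := c₁)).div_atTop hlog
    simpa using (tendsto_const_nhds (x := (1:ℝ))).sub this
  have h2 : Tendsto (fun n : ℕ => 1 + c₂ / Real.log n) atTop (nhds 1) := by
    have := (tendsto_const_nhds (x := c₂)).div_atTop hlog
    simpa using (tendsto_const_nhds (x := (1:ℝ))).add this
  apply tendsto_of_tendsto_of_tendsto_of_le_of_le' h1 h2
  · filter_upwards [hf, hlog.eventually_gt_atTop 0] with n hn hpos
    rw [le_div_iff₀ hpos]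
    have h := hn.1
    field_simp
    nlinarith [hpos]
  · filter_upwards [hf, hlog.eventually_gt_atTop 0] with n hn hpos
    rw [div_le_iff₀ hpos]
    have h := hn.2
    field_simp
    nlinarith [hpos]

/-- For fixed `k, l ≥ 1`,
`(log n)^{-k} ∑ 1/(j₁ (j₂-j₁) ⋯ (j_k-j_{k-1})) → 1` as `n → ∞`,
where the sum is over integer tuples `l ≤ j₁ < j₂ < ⋯ < j_k ≤ n` with
`j_{i+1} - j_i > l` for `i = 1, …, k-1`. -/
theorem stmt14 (k l : ℕ) (hk : 1 ≤ k) (hl : 1 ≤ l) :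
    Tendsto (fun n : ℕ =>
        (1 / (Real.log n) ^ k) *
          ∑ j ∈ (Fintype.piFinset fun _ : Fin k => Finset.Icc l n).filter
              (fun j : Fin k → ℕ =>
                l ≤ j ⟨0, hk⟩ ∧
                (∀ i₁ i₂ : Fin k, i₁ < i₂ → j i₁ < j i₂) ∧
                (∀ i : Fin k, ∀ hi : (i : ℕ) + 1 < k, l < j ⟨(i : ℕ) + 1, hi⟩ - j i)),
            1 / ((j ⟨0, hk⟩ : ℝ) *
              ∏ i : Fin k, if hi : (i : ℕ) + 1 < k then
                ((j ⟨(i : ℕ) + 1, hi⟩ : ℝ) - (j i : ℝ)) else 1))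
      atTop (nhds 1) := by
  -- the sets
  set A : ℕ → Finset (Fin k → ℕ) := fun n =>
    (Fintype.piFinset fun _ : Fin k => Finset.Icc l n).filter
      (fun j : Fin k → ℕ =>
        l ≤ j ⟨0, hk⟩ ∧
        (∀ i₁ i₂ : Fin k, i₁ < i₂ → j i₁ < j i₂) ∧
        (∀ i : Fin k, ∀ hi : (i : ℕ) + 1 < k, l < j ⟨(i : ℕ) + 1, hi⟩ - j i)) with hA
  set D : ℕ → Finset (Fin k → ℕ) := fun n =>
    (Fintype.piFinset fun _ : Fin k => Finset.Icc 1 n).filter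
      (fun d : Fin k → ℕ =>
        l ≤ d ⟨0, hk⟩ ∧ (∀ i : Fin k, (i : ℕ) ≠ 0 → l + 1 ≤ d i) ∧ ∑ i, d i ≤ n) with hD
  -- main combinatorial identity
  have key : ∀ n : ℕ,
      (∑ j ∈ A n, 1 / ((j ⟨0, hk⟩ : ℝ) *
          ∏ i : Fin k, if hi : (i : ℕ) + 1 < k then
            ((j ⟨(i : ℕ) + 1, hi⟩ : ℝ) - (j i : ℝ)) else 1)) =
      ∑ d ∈ D n, ∏ i : Fin k, ((d i : ℝ))⁻¹ := by
    intro n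
    refine Finset.sum_nbij' (toD k) (toJ k) ?_ ?_ ?_ ?_ ?_
    · -- toD maps A n into D n
      intro j hj
      simp only [hA, Finset.mem_filter, Fintype.mem_piFinset, Finset.mem_Icc] at hj
      obtain ⟨hbox, hj0, hmono, hgap⟩ := hj
      have hDval : ∀ i : Fin k, (i : ℕ) ≠ 0 → l + 1 ≤ toD k j i := by
        intro i hi0
        obtain ⟨p, hp⟩ : ∃ p, (i : ℕ) = p + 1 := ⟨(i : ℕ) - 1, by omega⟩
        have hpk : p + 1 < k := hp ▸ i.2
        have hth : l < j ⟨p + 1, hpk⟩ - j ⟨p, by omega⟩ := hgap ⟨p, by omega⟩ hpk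
        rw [toD]
        have hieq : i = ⟨p + 1, hpk⟩ := Fin.ext hp
        subst hieq
        simp only [if_neg (Nat.succ_ne_zero p), Nat.add_sub_cancel]
        omega
      have hD0 : toD k j ⟨0, hk⟩ = j ⟨0, hk⟩ := by simp [toD]
      have hsum : ∑ i, toD k j i = j ⟨k - 1, by omega⟩ := by
        rw [← toJ_last hk, toJ_toD hk j hmono]
      have hge1 : ∀ i : Fin k, 1 ≤ toD k j i := by
        intro i
        by_cases hi0 : (i : ℕ) = 0
        · have : i = ⟨0, hk⟩ := Fin.ext hi0
          rw [this, hD0]; omega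
        · have := hDval i hi0; omega
      simp only [hD, Finset.mem_filter, Fintype.mem_piFinset, Finset.mem_Icc]
      refine ⟨fun i => ⟨hge1 i, ?_⟩, by rw [hD0]; exact hj0, hDval, ?_⟩
      · calc toD k j i ≤ ∑ m, toD k j m :=
              Finset.single_le_sum (fun m _ => Nat.zero_le _) (Finset.mem_univ i)
          _ = j ⟨k - 1, by omega⟩ := hsum
          _ ≤ n := (hbox _).2
      · rw [hsum]; exact (hbox _).2
    · -- toJ maps D n into A n
      intro d hd
      simp only [hD, Finset.mem_filter, Fintype.mem_piFinset, Finset.mem_Icc] at hd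
      obtain ⟨hbox, hd0, hdbig, hdsum⟩ := hd
      have hJ0 : toJ k d ⟨0, hk⟩ = d ⟨0, hk⟩ := toJ_zero hk d
      have hmono : ∀ i₁ i₂ : Fin k, i₁ < i₂ → toJ k d i₁ < toJ k d i₂ := by
        intro i₁ i₂ h12
        have h12' : (i₁ : ℕ) + 1 ≤ (i₂ : ℕ) := h12
        have hlt : (i₁ : ℕ) + 1 < k := lt_of_le_of_lt h12' i₂.2
        have hstep := toJ_succ (i₁ : ℕ) hlt d
        have h1 : 1 ≤ d ⟨(i₁ : ℕ) + 1, hlt⟩ := (hbox _).1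
        have h2 : toJ k d ⟨(i₁ : ℕ) + 1, hlt⟩ ≤ toJ k d i₂ := toJ_mono d h12'
        have h3 : toJ k d ⟨(i₁ : ℕ), by omega⟩ = toJ k d i₁ := by congr 1
        omega
      simp only [hA, Finset.mem_filter, Fintype.mem_piFinset, Finset.mem_Icc]
      refine ⟨fun i => ⟨?_, ?_⟩, by rw [hJ0]; exact hd0, hmono, ?_⟩
      · calc l ≤ d ⟨0, hk⟩ := hd0
          _ = toJ k d ⟨0, hk⟩ := hJ0.symm
          _ ≤ toJ k d i := toJ_mono d (by simp [Fin.le_def])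
      · exact le_trans (toJ_le_sum d i) hdsum
      · intro i hi
        have hstep := toJ_succ (i : ℕ) hi d
        have h3 : toJ k d ⟨(i : ℕ), by omega⟩ = toJ k d i := by congr 1
        have h1 : l + 1 ≤ d ⟨(i : ℕ) + 1, hi⟩ := hdbig _ (Nat.succ_ne_zero _)
        omega
    · -- left inverse
      intro j hj
      simp only [hA, Finset.mem_filter] at hj
      exact toJ_toD hk j hj.2.2.1
    · -- right inverse
      intro d _
      exact toD_toJ hk d
    · -- values agree
      intro j hj
      simp only [hA, Finset.mem_filter, Fintype.mem_piFinset, Finset.mem_Icc] at hj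
      obtain ⟨hbox, hj0, hmono, hgap⟩ := hj
      rw [one_div, Finset.prod_inv_distrib]
      congr 1
      -- reduce to an identity of products over ranges
      set F : ℕ → ℝ := fun p =>
        if hp : p + 1 < k then
          ((j ⟨p + 1, hp⟩ : ℝ) - (j ⟨p, by omega⟩ : ℝ)) else 1 with hF
      set G : ℕ → ℝ := fun p =>
        if hp : p < k then (toD k j ⟨p, hp⟩ : ℝ) else 1 with hG
      have e1 : (∏ i : Fin k, if hi : (i : ℕ) + 1 < k then
          ((j ⟨(i : ℕ) + 1, hi⟩ : ℝ) - (j i : ℝ)) else 1) = ∏ p ∈ Finset.range k, F p := by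
        rw [← Fin.prod_univ_eq_prod_range F k]
      have e2 : (∏ i : Fin k, ((toD k j i : ℕ) : ℝ)) = ∏ p ∈ Finset.range k, G p := by
        rw [← Fin.prod_univ_eq_prod_range G k]
        apply Finset.prod_congr rfl
        intro i _
        simp only [hG]
        rw [dif_pos i.2]
      rw [e1, e2]
      obtain ⟨K, rfl⟩ : ∃ K, k = K + 1 := ⟨k - 1, by omega⟩
      rw [Finset.prod_range_succ, Finset.prod_range_succ']
      have hFK : F K = 1 := by rw [hF]; simp
      have hG0 : G 0 = (j ⟨0, hk⟩ : ℝ) := by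
        simp only [hG]
        rw [dif_pos (by omega : (0:ℕ) < K + 1)]
        simp [toD]
      have hFG : ∀ p ∈ Finset.range K, F p = G (p + 1) := by
        intro p hp
        rw [Finset.mem_range] at hp
        have hpk : p + 1 < K + 1 := by omega
        simp only [hF, hG]
        rw [dif_pos hpk, dif_pos hpk]
        have hle : j ⟨p, by omega⟩ ≤ j ⟨p + 1, hpk⟩ :=
          (hmono ⟨p, by omega⟩ ⟨p + 1, hpk⟩ (by simp [Fin.lt_def])).le
        rw [toD]
        simp only [if_neg (Nat.succ_ne_zero p), Nat.add_sub_cancel]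
        rw [Nat.cast_sub hle]
      rw [hFK, mul_one, hG0, Finset.prod_congr rfl hFG]
      ring
  simp only [hA] at key
  simp only [key]
  -- harmonic-type sums
  set H : ℕ → ℝ := fun m => ∑ d ∈ Finset.Icc 1 m, ((d : ℝ))⁻¹ with hH
  have HresQ : ∀ m : ℕ, H m = (harmonic m : ℝ) := by
    intro m
    rw [hH, harmonic_eq_sum_Icc]
    push_cast
    rfl
  have Hlb : ∀ m : ℕ, Real.log ((m : ℝ) + 1) ≤ H m := by
    intro m
    rw [HresQ]
    have := log_add_one_le_harmonic m
    push_cast at this ⊢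
    linarith
  have Hub : ∀ m : ℕ, H m ≤ 1 + Real.log m := by
    intro m
    rw [HresQ]
    exact harmonic_le_one_add_log m
  have Hnonneg : ∀ m : ℕ, 0 ≤ H m := by
    intro m
    rw [hH]
    positivity
  have Hsplit : ∀ a m : ℕ, a ≤ m →
      ∑ d ∈ Finset.Icc (a + 1) m, ((d : ℝ))⁻¹ = H m - H a := by
    intro a m ham
    have hcons := Finset.sum_Ioc_consecutive (fun d : ℕ => ((d : ℝ))⁻¹)
      (Nat.zero_le a) ham
    have h1 : ∀ b c : ℕ, Finset.Icc (b + 1) c = Finset.Ioc b c := by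
      intro b c
      ext x
      simp only [Finset.mem_Icc, Finset.mem_Ioc]
      omega
    have h2 : Finset.Icc 1 m = Finset.Ioc 0 m := by simpa using h1 0 m
    have h3 : Finset.Icc 1 a = Finset.Ioc 0 a := by simpa using h1 0 a
    simp only [hH, h1 a m, h2, h3]
    linarith
  -- the upper-bound harmonic-sum limit
  have tU : Tendsto (fun n : ℕ => (∑ d ∈ Finset.Icc l n, ((d : ℝ))⁻¹) / Real.log n)
      atTop (nhds 1) := by
    apply tendsto_div_log (H (l - 1)) 1
    filter_upwards [eventually_ge_atTop (l + 1)] with n hn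
    have hn1 : (1 : ℝ) ≤ (n : ℝ) := by exact_mod_cast Nat.one_le_iff_ne_zero.mpr (by omega)
    have h2 : ∑ d ∈ Finset.Icc l n, ((d : ℝ))⁻¹ = H n - H (l - 1) := by
      have h1 : l - 1 + 1 = l := by omega
      rw [← h1]
      exact Hsplit (l - 1) n (by omega)
    constructor
    · rw [h2]
      have h3 : Real.log n ≤ Real.log ((n : ℝ) + 1) := by
        apply Real.log_le_log (by linarith)
        linarith
      have h4 := Hlb n
      linarith
    · have hsub : ∑ d ∈ Finset.Icc l n, ((d : ℝ))⁻¹ ≤ H n := by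
        rw [hH]
        apply Finset.sum_le_sum_of_subset_of_nonneg (Finset.Icc_subset_Icc hl le_rfl)
        intro i _ _
        positivity
      have h5 := Hub n
      linarith
  -- the lower-bound harmonic-sum limit
  have tL : Tendsto (fun n : ℕ =>
      (∑ d ∈ Finset.Icc (l + 1) (n / k), ((d : ℝ))⁻¹) / Real.log n) atTop (nhds 1) := by
    apply tendsto_div_log (Real.log k + H l) 1
    filter_upwards [eventually_ge_atTop (k * (l + 1))] with n hn
    have hk0 : 0 < k := hk
    have hnk : l + 1 ≤ n / k := by
      rw [Nat.le_div_iff_mul_le hk0, mul_comm]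
      exact hn
    have hn1 : 1 ≤ n := by
      have h0 : 1 * 1 ≤ k * (l + 1) := Nat.mul_le_mul hk (by omega)
      omega
    have hn1R : (1 : ℝ) ≤ (n : ℝ) := by exact_mod_cast hn1
    have hkR : (0 : ℝ) < (k : ℝ) := by exact_mod_cast hk0
    rw [Hsplit l (n / k) (by omega)]
    constructor
    · have hlt : n < k * (n / k) + k := by
        have hmod := Nat.div_add_mod n k
        have hmodlt := Nat.mod_lt n hk0
        omega
      have h1 : (n : ℝ) / k ≤ ((n / k : ℕ) : ℝ) + 1 := by
        rw [div_le_iff₀ hkR]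
        have : (n : ℝ) < (k : ℝ) * ((n / k : ℕ) : ℝ) + k := by exact_mod_cast hlt
        nlinarith
      have h2 : Real.log ((n : ℝ) / k) ≤ Real.log (((n / k : ℕ) : ℝ) + 1) := by
        apply Real.log_le_log (by positivity) h1
      rw [Real.log_div (by linarith) (by linarith)] at h2
      have h3 := Hlb (n / k)
      linarith
    · have h4 := Hub (n / k)
      have h5 : Real.log ((n / k : ℕ) : ℝ) ≤ Real.log n := by
        apply Real.log_le_log
        · have : 0 < n / k := by omega
          exact_mod_cast this
        · exact_mod_cast Nat.div_le_self n k
      have h6 := Hnonneg l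
      linarith
  -- raise to the k-th power
  have tUk : Tendsto (fun n : ℕ =>
      ((∑ d ∈ Finset.Icc l n, ((d : ℝ))⁻¹) / Real.log n) ^ k) atTop (nhds 1) := by
    simpa using tU.pow k
  have tLk : Tendsto (fun n : ℕ =>
      ((∑ d ∈ Finset.Icc (l + 1) (n / k), ((d : ℝ))⁻¹) / Real.log n) ^ k) atTop (nhds 1) := by
    simpa using tL.pow k
  -- squeeze
  refine tendsto_of_tendsto_of_tendsto_of_le_of_le' tLk tUk ?_ ?_
  · -- lower bound
    filter_upwards [eventually_ge_atTop 2] with n hn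
    have hlog : 0 < Real.log n := Real.log_pos (by exact_mod_cast hn)
    have hlogk : 0 < (Real.log n) ^ k := by positivity
    have hbig : ∑ p ∈ Fintype.piFinset (fun _ : Fin k => Finset.Icc (l + 1) (n / k)),
        ∏ i : Fin k, ((p i : ℝ))⁻¹ = (∑ d ∈ Finset.Icc (l + 1) (n / k), ((d : ℝ))⁻¹) ^ k := by
      rw [← Finset.prod_univ_sum (fun _ : Fin k => Finset.Icc (l + 1) (n / k))
        (fun _ d => ((d : ℝ))⁻¹)]
      simp
    have hS_lb : (∑ d ∈ Finset.Icc (l + 1) (n / k), ((d : ℝ))⁻¹) ^ k ≤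
        ∑ d ∈ D n, ∏ i : Fin k, ((d i : ℝ))⁻¹ := by
      rw [← hbig]
      apply Finset.sum_le_sum_of_subset_of_nonneg
      · intro d hd
        simp only [Fintype.mem_piFinset, Finset.mem_Icc] at hd
        simp only [hD, Finset.mem_filter, Fintype.mem_piFinset, Finset.mem_Icc]
        have hsum : ∑ i, d i ≤ n := by
          calc ∑ i, d i ≤ ∑ _i : Fin k, n / k := Finset.sum_le_sum (fun i _ => (hd i).2)
            _ = k * (n / k) := by simp [mul_comm]
            _ ≤ n := by
                have := Nat.div_add_mod n k
                omega
        refine ⟨fun i => ⟨by have := (hd i).1; omega,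
          le_trans (hd i).2 (Nat.div_le_self n k)⟩,
          by have := (hd ⟨0, hk⟩).1; omega, fun i _ => (hd i).1, hsum⟩
      · intro d _ _
        positivity
    rw [div_pow, one_div, inv_mul_eq_div]
    gcongr
  · -- upper bound
    filter_upwards [eventually_ge_atTop 2] with n hn
    have hlog : 0 < Real.log n := Real.log_pos (by exact_mod_cast hn)
    have hlogk : 0 < (Real.log n) ^ k := by positivity
    have hbig : ∑ p ∈ Fintype.piFinset (fun _ : Fin k => Finset.Icc l n),
        ∏ i : Fin k, ((p i : ℝ))⁻¹ = (∑ d ∈ Finset.Icc l n, ((d : ℝ))⁻¹) ^ k := by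
      rw [← Finset.prod_univ_sum (fun _ : Fin k => Finset.Icc l n)
        (fun _ d => ((d : ℝ))⁻¹)]
      simp
    have hS_ub : ∑ d ∈ D n, ∏ i : Fin k, ((d i : ℝ))⁻¹ ≤
        (∑ d ∈ Finset.Icc l n, ((d : ℝ))⁻¹) ^ k := by
      rw [← hbig]
      apply Finset.sum_le_sum_of_subset_of_nonneg
      · intro d hd
        simp only [hD, Finset.mem_filter, Fintype.mem_piFinset, Finset.mem_Icc] at hd
        obtain ⟨hbox, hd0, hdbig, _⟩ := hd
        simp only [Fintype.mem_piFinset, Finset.mem_Icc]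
        intro i
        refine ⟨?_, (hbox i).2⟩
        by_cases h0 : (i : ℕ) = 0
        · have : i = ⟨0, hk⟩ := Fin.ext h0
          rw [this]
          exact hd0
        · have := hdbig i h0
          omega
      · intro d _ _
        positivity
    rw [div_pow, one_div, inv_mul_eq_div]
    gcongr
end
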